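/- arXiv:1512.08071 — 3 statements merged into one kernel-verified Lean document; each statement's English description precedes it below -/
import Mathlib

section
/- Let H : Σ → ℝ be continuous with summable variation and let β > 0. Then there exist λ_β > 0 and a continuous function Φ_β : Σ → ℝ with Φ_β(x) > 0 for every x ∈ Σ, max Φ_β = 1 and L_β[Φ_β] = λ_β Φ_β. Moreover this eigenfunction is unique: if Φ̃ : Σ → ℝ is continuous, everywhere positive and satisfies L_β[Φ̃] = λ̃ Φ̃ for some λ̃ > 0, then λ̃ = λ_β and Φ̃ = s Φ_β for some s > 0. -/
/-!
The transfer operator maps into itself the cone of nonnegative functions `f` with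
`f x ≤ exp (|β| ∑_{j>m} var(H,j)) f y` whenever `x` and `y` are `m`-close; summability of the
variation is exactly what makes these exponents finite and tend to `0`. Its elements are therefore
comparable at any two points, so `n ↦ Lⁿ1` is multiplicative up to a bounded factor and grows like
`λⁿ`. A cluster point, for pointwise convergence, of the Cesàro means of `λ⁻ⁿ Lⁿ1` is a positive
eigenfunction lying in the cone, hence continuous.

For uniqueness, iterating `Φ' ≤ C Φ` shows that two positive eigenfunctions have the same
eigenvalue. With `s = min Φ'/Φ`, the eigenfunction `Φ' - s Φ ≥ 0` vanishes somewhere, and the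
eigenvalue equation propagates its zeros to their preimages under the shift; the backward orbit of
a point is dense.
-/

open MeasureTheory Filter Topology

/-- The one-sided full shift space on two symbols. -/
abbrev Sig : Type := ℕ → Fin 2

/-- The left shift map. -/
def shft : Sig → Sig := fun x n => x (n + 1)

/-- Concatenation of a symbol with a configuration. -/
def cons2 (i : Fin 2) (x : Sig) : Sig := fun n => match n with
  | 0 => i
  | Nat.succ k => x k

/-- `x` and `y` agree on their first `n` coordinates. -/
def nClose (n : ℕ) (x y : Sig) : Prop := ∀ k, k < n → x k = y k

/-- The `n`-th variation of `H`. -/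
noncomputable def Var (H : Sig → ℝ) (n : ℕ) : ℝ :=
  sSup {d : ℝ | ∃ x y : Sig, nClose n x y ∧ d = |H x - H y|}

/-- `H` has summable variation. -/
def SummableVar (H : Sig → ℝ) : Prop := Summable (fun n : ℕ => Var H (n + 1))

/-- The transfer operator at inverse temperature `β`. -/
noncomputable def transfer (β : ℝ) (H : Sig → ℝ) (Φ : Sig → ℝ) : Sig → ℝ :=
  fun x => Real.exp (-β * H (cons2 0 x)) * Φ (cons2 0 x)
         + Real.exp (-β * H (cons2 1 x)) * Φ (cons2 1 x)

/-- The cylinder set determined by a finite word. -/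
def cyl (w : List (Fin 2)) : Set Sig := {x | ∀ i : ℕ, ∀ h : i < w.length, x i = w.get ⟨i, h⟩}

/-- The fixed point `0^∞`. -/
def zpt : Sig := fun _ => 0

/-- The fixed point `1^∞`. -/
def opt : Sig := fun _ => 1

/-- The minimizing ergodic value of `H`. -/
noncomputable def Hbar (H : Sig → ℝ) : ℝ :=
  sInf {r : ℝ | ∃ μ : Measure Sig, IsProbabilityMeasure μ ∧ μ.map shft = μ ∧ r = ∫ x, H x ∂μ}

/-- A minimizing measure for `H`. -/
def IsMinimizing (H : Sig → ℝ) (μ : Measure Sig) : Prop :=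
  IsProbabilityMeasure μ ∧ μ.map shft = μ ∧
  ∀ ν : Measure Sig, IsProbabilityMeasure ν → ν.map shft = ν →
    ∫ x, H x ∂μ ≤ ∫ x, H x ∂ν

/-- The (topological) support of a measure. -/
def mSupport (μ : Measure Sig) : Set Sig := {x | ∀ U : Set Sig, IsOpen U → x ∈ U → μ U ≠ 0}

/-- The Mather set of `H` : union of supports of minimizing measures. -/
def mather (H : Sig → ℝ) : Set Sig := {x | ∃ μ : Measure Sig, IsMinimizing H μ ∧ x ∈ mSupport μ}

/-- Birkhoff sum of the normalized potential. -/
noncomputable def birk (H : Sig → ℝ) (k : ℕ) (z : Sig) : ℝ :=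
  ∑ i ∈ Finset.range k, (H (shft^[i] z) - Hbar H)

/-- The quantity `S_n^p(x,y)` (an infimum in `EReal`, `+∞` when the defining set is empty). -/
noncomputable def SBar (H : Sig → ℝ) (p n : ℕ) (x y : Sig) : EReal :=
  sInf {s : EReal | ∃ k : ℕ, n ≤ k ∧ ∃ z : Sig, nClose p z x ∧ nClose p (shft^[k] z) y ∧
    s = (birk H k z : EReal)}

/-- The Peierls barrier `h(x,y)`; since `S_n^p(x,y)` is nondecreasing in both `n` and `p`,
the double limit is a double supremum. -/
noncomputable def peierls (H : Sig → ℝ) (x y : Sig) : EReal := ⨆ p : ℕ, ⨆ n : ℕ, SBar H p n x y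

/-- The Lax-Oleinik operator (the two preimages of `y` under the shift are `0y` and `1y`). -/
noncomputable def laxOleinik (H V : Sig → ℝ) : Sig → ℝ :=
  fun y => min (V (cons2 0 y) + H (cons2 0 y)) (V (cons2 1 y) + H (cons2 1 y))

/-- A calibrated sub-action of `H`. -/
def IsCalibrated (H V : Sig → ℝ) : Prop :=
  Continuous V ∧ laxOleinik H V = fun y => V y + Hbar H

/-- Membership in the class `𝕂`. -/
def InK (H V : Sig → ℝ) : Prop :=
  Continuous V ∧ ∀ n : ℕ, 1 ≤ n → Var V n ≤ ∑' k : ℕ, Var H (n + 1 + k)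

/-- A reduced double-well type potential with data `(H_n^0)`, `(H_n^1)` (indexed from `n = 1`). -/
structure ReducedDW (H : Sig → ℝ) (H0 H1 : ℕ → ℝ) : Prop where
  cont : Continuous H
  nonneg : ∀ x, 0 ≤ H x
  svar : SummableVar H
  zero : ∀ x ∈ cyl [0, 0] ∪ cyl [1, 1], H x = 0
  pos0 : ∀ n, 1 ≤ n → 0 < H0 n
  pos1 : ∀ n, 1 ≤ n → 0 < H1 n
  val0 : ∀ n, 1 ≤ n → ∀ x ∈ cyl (0 :: (List.replicate n 1 ++ [0])), H x = H0 n
  val1 : ∀ n, 1 ≤ n → ∀ x ∈ cyl (1 :: (List.replicate n 0 ++ [1])), H x = H1 n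
  bdd0 : ∀ k : ℕ, BddAbove (Set.range fun n : ℕ => |H0 (k + 1) - H0 (k + 1 + n)|)
  bdd1 : ∀ k : ℕ, BddAbove (Set.range fun n : ℕ => |H1 (k + 1) - H1 (k + 1 + n)|)
  sum0 : Summable (fun k : ℕ => ⨆ n : ℕ, |H0 (k + 1) - H0 (k + 1 + n)|)
  sum1 : Summable (fun k : ℕ => ⨆ n : ℕ, |H1 (k + 1) - H1 (k + 1 + n)|)

/-- A double-well type potential with data `a_n^0, a_n^1, b_n^0, b_n^1` (indexed from `n = 1`). -/
structure DW (H : Sig → ℝ) (a0 a1 b0 b1 : ℕ → ℝ) : Prop where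
  cont : Continuous H
  nonneg : ∀ x, 0 ≤ H x
  svar : SummableVar H
  anneg0 : ∀ n, 1 ≤ n → 0 ≤ a0 n
  anneg1 : ∀ n, 1 ≤ n → 0 ≤ a1 n
  bpos0 : ∀ n, 1 ≤ n → 0 < b0 n
  bpos1 : ∀ n, 1 ≤ n → 0 < b1 n
  vala0 : ∀ n, 1 ≤ n → ∀ x ∈ cyl (0 :: (List.replicate n 0 ++ [1])), H x = a0 n
  vala1 : ∀ n, 1 ≤ n → ∀ x ∈ cyl (1 :: (List.replicate n 1 ++ [0])), H x = a1 n
  valb0 : ∀ n, 1 ≤ n → ∀ x ∈ cyl (0 :: (List.replicate n 1 ++ [0])), H x = b0 n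
  valb1 : ∀ n, 1 ≤ n → ∀ x ∈ cyl (1 :: (List.replicate n 0 ++ [1])), H x = b1 n
  suma0 : Summable (fun n : ℕ => ((n + 1 : ℕ) : ℝ) * a0 (n + 1))
  suma1 : Summable (fun n : ℕ => ((n + 1 : ℕ) : ℝ) * a1 (n + 1))
  bddb0 : ∀ k : ℕ, BddAbove (Set.range fun n : ℕ => |b0 (k + 1) - b0 (k + 1 + n)|)
  bddb1 : ∀ k : ℕ, BddAbove (Set.range fun n : ℕ => |b1 (k + 1) - b1 (k + 1 + n)|)
  sumb0 : Summable (fun k : ℕ => ⨆ n : ℕ, |b0 (k + 1) - b0 (k + 1 + n)|)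
  sumb1 : Summable (fun k : ℕ => ⨆ n : ℕ, |b1 (k + 1) - b1 (k + 1 + n)|)

/-- The series `F_β(λ) = Σ_{k≥1} λ^{-k} e^{-β H_k}`. -/
noncomputable def Fser (β : ℝ) (Hs : ℕ → ℝ) (lam : ℝ) : ℝ :=
  ∑' k : ℕ, (lam ^ (k + 1))⁻¹ * Real.exp (-β * Hs (k + 1))

/-- The series `F̃_β(λ) = Σ_{k≥1} k λ^{-k} e^{-β H_k}`. -/
noncomputable def Ftser (β : ℝ) (Hs : ℕ → ℝ) (lam : ℝ) : ℝ :=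
  ∑' k : ℕ, ((k + 1 : ℕ) : ℝ) * (lam ^ (k + 1))⁻¹ * Real.exp (-β * Hs (k + 1))

/-- The data of the Ruelle-Perron-Frobenius solution and Gibbs measure at inverse temperature `β`:
eigenfunction `Φ` (positive, continuous, max 1), eigenvalue `lam`, eigenprobability `ν`,
and the Gibbs measure `μ = Φ ν / ∫ Φ dν`. -/
def GibbsData (H : Sig → ℝ) (β : ℝ) (Φ : Sig → ℝ) (lam : ℝ) (ν μ : Measure Sig) : Prop :=
  Continuous Φ ∧ (∀ x, 0 < Φ x) ∧ IsGreatest (Set.range Φ) 1 ∧ 0 < lam ∧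
  (transfer β H Φ = fun x => lam * Φ x) ∧
  IsProbabilityMeasure ν ∧
  (∀ f : Sig → ℝ, Continuous f → ∫ x, transfer β H f x ∂ν = lam * ∫ x, f x ∂ν) ∧
  μ = (ENNReal.ofReal (∫ x, Φ x ∂ν))⁻¹ • ν.withDensity (fun x => ENNReal.ofReal (Φ x))

open Set

lemma nClose_iff_mem_cylinder {m : ℕ} {x y : Sig} : nClose m x y ↔ y ∈ PiNat.cylinder x m :=
  ⟨fun h i hi => (h i hi).symm, fun h i hi => (h i hi).symm⟩

lemma nClose_cons2 {m : ℕ} {x y : Sig} (h : nClose m x y) (i : Fin 2) :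
    nClose (m + 1) (cons2 i x) (cons2 i y)
  | 0, _ => rfl
  | k + 1, hk => h k (Nat.succ_lt_succ_iff.mp hk)

lemma nhds_basis_cylinder (x : Sig) :
    (𝓝 x).HasBasis (fun _ : ℕ => True) (PiNat.cylinder x) := by
  refine ⟨fun s => ⟨fun hs => ?_, fun ⟨n, _, hn⟩ => mem_of_superset
    ((PiNat.isOpen_cylinder _ x n).mem_nhds (PiNat.self_mem_cylinder x n)) hn⟩⟩
  obtain ⟨_, ⟨y, n, rfl⟩, hx, hs⟩ := (PiNat.isTopologicalBasis_cylinders _).mem_nhds_iff.1 hs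
  exact ⟨n, trivial, PiNat.mem_cylinder_iff_eq.1 hx ▸ hs⟩

lemma continuous_of_abs_sub_le_of_nClose {f : Sig → ℝ} {ω : ℕ → ℝ}
    (hω : Tendsto ω atTop (𝓝 0)) (hf : ∀ m x y, nClose m x y → |f x - f y| ≤ ω m) :
    Continuous f := by
  refine continuous_iff_continuousAt.2 fun x =>
    ((nhds_basis_cylinder x).tendsto_iff Metric.nhds_basis_ball).2 fun ε hε => ?_
  obtain ⟨m, hm⟩ := (hω.eventually (gt_mem_nhds hε)).exists
  refine ⟨m, trivial, fun y hy => ?_⟩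
  rw [Metric.mem_ball, Real.dist_eq, abs_sub_comm]
  exact (hf m x y (nClose_iff_mem_cylinder.2 hy)).trans_lt hm

lemma eq_univ_of_isClosed_of_cons2_mem {S : Set Sig} (hS : IsClosed S) (hne : S.Nonempty)
    (hcons : ∀ i, ∀ z ∈ S, cons2 i z ∈ S) : S = univ := by
  obtain ⟨x₀, hx₀⟩ := hne
  have approx : ∀ m y, ∃ z ∈ S, nClose m y z := by
    intro m
    induction m with
    | zero => exact fun _ => ⟨x₀, hx₀, fun _ h => absurd h (Nat.not_lt_zero _)⟩
    | succ m ih =>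
      intro y
      obtain ⟨z, hz, hyz⟩ := ih (shft y)
      refine ⟨cons2 (y 0) z, hcons _ z hz, ?_⟩
      rintro (_ | k) hk
      · rfl
      · exact hyz k (by omega)
  refine eq_univ_of_forall fun y => hS.closure_eq ▸
    (mem_closure_iff_nhds_basis (nhds_basis_cylinder y)).2 fun m _ => ?_
  obtain ⟨z, hz, hyz⟩ := approx m y
  exact ⟨z, hz, nClose_iff_mem_cylinder.1 hyz⟩

section Variation

variable {H : Sig → ℝ}

lemma var_nonneg (H : Sig → ℝ) (n : ℕ) : 0 ≤ Var H n :=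
  Real.sSup_nonneg fun _ ⟨_, _, _, hd⟩ => hd ▸ abs_nonneg _

lemma abs_sub_le_var (hH : Continuous H) {n : ℕ} {x y : Sig} (h : nClose n x y) :
    |H x - H y| ≤ Var H n := by
  have hbdd := (isCompact_range (f := fun p : Sig × Sig => |H p.1 - H p.2|) (by fun_prop)).bddAbove
  refine le_csSup (hbdd.mono ?_) ⟨x, y, h, rfl⟩
  rintro _ ⟨x, y, -, rfl⟩
  exact ⟨(x, y), rfl⟩

noncomputable def varTail (H : Sig → ℝ) (m : ℕ) : ℝ := ∑' k, Var H (m + 1 + k)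

lemma varTail_nonneg (H : Sig → ℝ) (m : ℕ) : 0 ≤ varTail H m :=
  tsum_nonneg fun _ => var_nonneg _ _

lemma varTail_eq_var_add (hv : SummableVar H) (m : ℕ) :
    varTail H m = Var H (m + 1) + varTail H (m + 1) := by
  have hs : Summable fun k => Var H (m + 1 + k) :=
    ((summable_nat_add_iff m).2 hv).congr fun k => congrArg (Var H) (by ring)
  rw [varTail, hs.tsum_eq_zero_add, varTail]
  simp only [add_zero, add_assoc, add_comm 1]

lemma tendsto_varTail (H : Sig → ℝ) : Tendsto (varTail H) atTop (𝓝 0) :=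
  (tendsto_sum_nat_add fun n => Var H (n + 1)).congr fun m =>
    tsum_congr fun k => congrArg (Var H) (by ring)

end Variation

section Transfer

variable {β : ℝ} {H : Sig → ℝ}

noncomputable def transferₗ (β : ℝ) (H : Sig → ℝ) : Module.End ℝ (Sig → ℝ) where
  toFun := transfer β H
  map_add' f g := by ext x; simp only [transfer, Pi.add_apply]; ring
  map_smul' c f := by
    ext x; simp only [transfer, Pi.smul_apply, smul_eq_mul, RingHom.id_apply]; ring

@[simp] lemma transferₗ_apply (f : Sig → ℝ) : transferₗ β H f = transfer β H f := rfl

lemma monotone_transfer : Monotone (transfer β H) := fun _ _ h _ =>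
  add_le_add (mul_le_mul_of_nonneg_left (h _) (Real.exp_pos _).le)
    (mul_le_mul_of_nonneg_left (h _) (Real.exp_pos _).le)

lemma monotone_transferₗ_pow (n : ℕ) : Monotone (transferₗ β H ^ n) := by
  rw [Module.End.coe_pow]
  exact monotone_transfer.iterate n

lemma transfer_pos {f : Sig → ℝ} (hf : ∀ x, 0 < f x) (x : Sig) : 0 < transfer β H f x :=
  add_pos (mul_pos (Real.exp_pos _) (hf _)) (mul_pos (Real.exp_pos _) (hf _))

lemma transferₗ_pow_pos {f : Sig → ℝ} (hf : ∀ x, 0 < f x) (n : ℕ) (x : Sig) :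
    0 < (transferₗ β H ^ n) f x := by
  induction n generalizing x with
  | zero => exact hf x
  | succ n ih => rw [pow_succ', Module.End.mul_apply]; exact transfer_pos ih x

lemma continuous_transfer : Continuous (transfer β H) :=
  continuous_pi fun _ => by unfold transfer; fun_prop

lemma transferₗ_pow_eigen {f : Sig → ℝ} {r : ℝ} (hf : transferₗ β H f = r • f) (n : ℕ) :
    (transferₗ β H ^ n) f = r ^ n • f := by
  induction n with
  | zero => simp
  | succ n ih => rw [pow_succ, Module.End.mul_apply, hf, map_smul, ih, smul_smul, pow_succ']

end Transfer

section DistortionCone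

variable {β : ℝ} {H : Sig → ℝ}

def distortionCone (β : ℝ) (H : Sig → ℝ) : Set (Sig → ℝ) :=
  {f | ∀ m x y, nClose m x y → f x ≤ Real.exp (|β| * varTail H m) * f y}

lemma one_le_exp_varTail (β : ℝ) (H : Sig → ℝ) (m : ℕ) : 1 ≤ Real.exp (|β| * varTail H m) :=
  Real.one_le_exp (mul_nonneg (abs_nonneg β) (varTail_nonneg H m))

lemma one_mem_distortionCone : (1 : Sig → ℝ) ∈ distortionCone β H := fun m _ _ _ => by
  simpa using one_le_exp_varTail β H m

lemma smul_mem_distortionCone {f : Sig → ℝ} (hf : f ∈ distortionCone β H) {c : ℝ} (hc : 0 ≤ c) :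
    c • f ∈ distortionCone β H := fun m x y hxy => by
  simpa only [Pi.smul_apply, smul_eq_mul, mul_left_comm _ c] using
    mul_le_mul_of_nonneg_left (hf m x y hxy) hc

lemma sum_mem_distortionCone {ι : Type*} {s : Finset ι} {f : ι → Sig → ℝ}
    (hf : ∀ i ∈ s, f i ∈ distortionCone β H) : ∑ i ∈ s, f i ∈ distortionCone β H :=
  fun m x y hxy => by
    simpa only [Finset.sum_apply, Finset.mul_sum] using
      Finset.sum_le_sum fun i hi => hf i hi m x y hxy

lemma isClosed_distortionCone : IsClosed (distortionCone β H) := by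
  simp only [distortionCone, ofPred_forall]
  exact isClosed_iInter fun m => isClosed_iInter fun x => isClosed_iInter fun y =>
    isClosed_iInter fun _ => isClosed_le (continuous_apply x)
      (continuous_const.mul (continuous_apply y))

lemma exp_neg_mul_le (hH : Continuous H) {m : ℕ} {x y : Sig} (hxy : nClose m x y) (i : Fin 2) :
    Real.exp (-β * H (cons2 i x))
      ≤ Real.exp (|β| * Var H (m + 1)) * Real.exp (-β * H (cons2 i y)) := by
  rw [← Real.exp_add, Real.exp_le_exp]
  have h₁ : -β * (H (cons2 i x) - H (cons2 i y)) ≤ |β| * |H (cons2 i x) - H (cons2 i y)| := by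
    simpa only [abs_mul, abs_neg] using le_abs_self (-β * (H (cons2 i x) - H (cons2 i y)))
  have h₂ := mul_le_mul_of_nonneg_left (abs_sub_le_var hH (nClose_cons2 hxy i)) (abs_nonneg β)
  linarith

lemma transfer_mem_distortionCone (hH : Continuous H) (hv : SummableVar H) {f : Sig → ℝ}
    (hf : f ∈ distortionCone β H) (hf₀ : 0 ≤ f) : transfer β H f ∈ distortionCone β H := by
  intro m x y hxy
  have term : ∀ i, Real.exp (-β * H (cons2 i x)) * f (cons2 i x) ≤
      Real.exp (|β| * varTail H m) * (Real.exp (-β * H (cons2 i y)) * f (cons2 i y)) := by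
    intro i
    rw [varTail_eq_var_add hv, mul_add, Real.exp_add]
    calc _ ≤ (Real.exp (|β| * Var H (m + 1)) * Real.exp (-β * H (cons2 i y))) *
          (Real.exp (|β| * varTail H (m + 1)) * f (cons2 i y)) :=
          mul_le_mul (exp_neg_mul_le hH hxy i) (hf _ _ _ (nClose_cons2 hxy i)) (hf₀ _)
            (by positivity)
      _ = _ := by ring
  simp only [transfer, mul_add]
  exact add_le_add (term 0) (term 1)

lemma abs_sub_le_of_mem_distortionCone {f : Sig → ℝ} (hf : f ∈ distortionCone β H)
    {c : ℝ} (hfc : ∀ x, f x ≤ c) {m : ℕ} {x y : Sig} (hxy : nClose m x y) :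
    |f x - f y| ≤ c * (Real.exp (|β| * varTail H m) - 1) := by
  have key : ∀ {x y}, nClose m x y → f x - f y ≤ c * (Real.exp (|β| * varTail H m) - 1) := by
    intro x y hxy
    nlinarith [hf m x y hxy, hfc y, one_le_exp_varTail β H m]
  exact abs_sub_le_iff.2 ⟨key hxy, key fun k hk => (hxy k hk).symm⟩

lemma continuous_of_mem_distortionCone {f : Sig → ℝ} (hf : f ∈ distortionCone β H) {c : ℝ}
    (hfc : ∀ x, f x ≤ c) : Continuous f := by
  refine continuous_of_abs_sub_le_of_nClose ?_ fun m x y =>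
    abs_sub_le_of_mem_distortionCone hf hfc
  have h : Tendsto (fun m => |β| * varTail H m) atTop (𝓝 0) := by
    simpa using (tendsto_varTail H).const_mul |β|
  simpa using (((Real.continuous_exp.tendsto 0).comp h).sub_const 1).const_mul c

lemma transferₗ_pow_one_mem_distortionCone (hH : Continuous H) (hv : SummableVar H) (n : ℕ) :
    (transferₗ β H ^ n) 1 ∈ distortionCone β H := by
  induction n with
  | zero => exact one_mem_distortionCone
  | succ n ih =>
    rw [pow_succ', Module.End.mul_apply]
    exact transfer_mem_distortionCone hH hv ih
      fun x => (transferₗ_pow_pos (fun _ => one_pos) n x).le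

end DistortionCone

lemma exists_le_nat_mul_le {u v : ℕ → ℝ} (hvu : ∀ n, v n ≤ u n)
    (hu : ∀ m n, u (m + n) ≤ u m + u n) (hv : ∀ m n, v m + v n ≤ v (m + n)) :
    ∃ l : ℝ, ∀ n : ℕ, v n ≤ n * l ∧ n * l ≤ u n := by
  have hu_mul : ∀ k n : ℕ, u ((k + 1) * n) ≤ (k + 1 : ℝ) * u n := by
    intro k n
    induction k with
    | zero => simp
    | succ k ih =>
      rw [show (k + 1 + 1) * n = (k + 1) * n + n by ring]
      push_cast
      linarith [hu ((k + 1) * n) n]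
  have hv_mul : ∀ k n : ℕ, (k + 1 : ℝ) * v n ≤ v ((k + 1) * n) := by
    intro k n
    induction k with
    | zero => simp
    | succ k ih =>
      rw [show (k + 1 + 1) * n = (k + 1) * n + n by ring]
      push_cast
      linarith [hv ((k + 1) * n) n]
  have key : ∀ k m : ℕ, v (k + 1) / (k + 1 : ℝ) ≤ u (m + 1) / (m + 1 : ℝ) := by
    intro k m
    rw [div_le_div_iff₀ (by positivity) (by positivity)]
    have h := (hv_mul m (k + 1)).trans ((hvu _).trans (mul_comm (m + 1) (k + 1) ▸ hu_mul k (m + 1)))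
    linarith
  have hbdd : BddBelow (range fun m : ℕ => u (m + 1) / (m + 1 : ℝ)) :=
    ⟨_, forall_mem_range.2 (key 0)⟩
  refine ⟨⨅ m : ℕ, u (m + 1) / (m + 1 : ℝ), fun n => ?_⟩
  rcases n with _ | k
  · simp only [Nat.cast_zero, zero_mul]
    exact ⟨by linarith [hv 0 0], by linarith [hu 0 0]⟩
  · have h₁ := le_ciInf (key k)
    have h₂ := ciInf_le hbdd k
    rw [div_le_iff₀ (by positivity)] at h₁
    rw [le_div_iff₀ (by positivity)] at h₂
    push_cast
    constructor <;> linarith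

lemma exists_le_pow_le {t : ℕ → ℝ} {D : ℝ} (ht : ∀ n, 0 < t n) (hD : 1 ≤ D)
    (hmul : ∀ m n, D⁻¹ * (t m * t n) ≤ t (m + n) ∧ t (m + n) ≤ D * (t m * t n)) :
    ∃ r > 0, ∀ n, D⁻¹ * t n ≤ r ^ n ∧ r ^ n ≤ D * t n := by
  have hD₀ : 0 < D := one_pos.trans_le hD
  have hlogD : 0 ≤ Real.log D := Real.log_nonneg hD
  have hlog : ∀ m n, Real.log (t m) + Real.log (t n) - Real.log D ≤ Real.log (t (m + n)) ∧
      Real.log (t (m + n)) ≤ Real.log D + Real.log (t m) + Real.log (t n) := by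
    intro m n
    obtain ⟨h₁, h₂⟩ := hmul m n
    have h₁ := Real.log_le_log (by positivity [ht m, ht n]) h₁
    have h₂ := Real.log_le_log (ht _) h₂
    rw [Real.log_mul (by positivity) (mul_pos (ht m) (ht n)).ne', Real.log_inv,
      Real.log_mul (ht m).ne' (ht n).ne'] at h₁
    rw [Real.log_mul hD₀.ne' (mul_pos (ht m) (ht n)).ne',
      Real.log_mul (ht m).ne' (ht n).ne'] at h₂
    constructor <;> linarith
  obtain ⟨l, hl⟩ := exists_le_nat_mul_le (u := fun n => Real.log D + Real.log (t n))
    (v := fun n => Real.log (t n) - Real.log D) (fun n => by linarith)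
    (fun m n => by linarith [(hlog m n).2]) (fun m n => by linarith [(hlog m n).1])
  refine ⟨Real.exp l, Real.exp_pos l, fun n => ?_⟩
  rw [← Real.exp_nat_mul, ← Real.exp_log (ht n), ← Real.exp_log hD₀, ← Real.exp_neg,
    ← Real.exp_add, ← Real.exp_add, Real.exp_le_exp, Real.exp_le_exp]
  constructor <;> linarith [hl n]

section Eigenfunction

variable {β : ℝ} {H : Sig → ℝ}

lemma exists_growth_rate (hH : Continuous H) (hv : SummableVar H) :
    ∃ r > 0, ∃ c > 0, ∀ n x,
      r ^ n ≤ c * (transferₗ β H ^ n) 1 x ∧ (transferₗ β H ^ n) 1 x ≤ c * r ^ n := by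
  set D := Real.exp (|β| * varTail H 0)
  set T : ℕ → Sig → ℝ := fun n => (transferₗ β H ^ n) 1
  have hD : 1 ≤ D := one_le_exp_varTail β H 0
  have hD₀ : 0 < D := one_pos.trans_le hD
  have comparable : ∀ n x y, T n x ≤ D * T n y := fun n x y =>
    transferₗ_pow_one_mem_distortionCone hH hv n 0 x y fun _ h => absurd h (Nat.not_lt_zero _)
  have hmul : ∀ m n, D⁻¹ * (T m zpt * T n zpt) ≤ T (m + n) zpt ∧
      T (m + n) zpt ≤ D * (T m zpt * T n zpt) := by
    intro m n
    have hsplit : T (m + n) = (transferₗ β H ^ m) (T n) := by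
      simp only [T, pow_add, Module.End.mul_apply]
    have hlow : (D⁻¹ * T n zpt) • (1 : Sig → ℝ) ≤ T n := fun x => by
      simpa [inv_mul_le_iff₀ hD₀] using comparable n zpt x
    have hupp : T n ≤ (D * T n zpt) • (1 : Sig → ℝ) := fun x => by
      simpa using comparable n x zpt
    have h₁ := monotone_transferₗ_pow (β := β) (H := H) m hlow zpt
    have h₂ := monotone_transferₗ_pow (β := β) (H := H) m hupp zpt
    simp only [map_smul, ← hsplit, Pi.smul_apply, smul_eq_mul] at h₁ h₂
    exact ⟨le_of_eq_of_le (by ring) h₁, h₂.trans_eq (by ring)⟩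
  obtain ⟨r, hr, hrt⟩ := exists_le_pow_le (fun n => transferₗ_pow_pos (fun _ => one_pos) n zpt)
    hD hmul
  refine ⟨r, hr, D ^ 2, by positivity, fun n x => ⟨?_, ?_⟩⟩
  · calc r ^ n ≤ D * T n zpt := (hrt n).2
      _ ≤ D * (D * T n x) := mul_le_mul_of_nonneg_left (comparable n zpt x) hD₀.le
      _ = D ^ 2 * T n x := by ring
  · have h : T n zpt ≤ D * r ^ n := by rw [← inv_mul_le_iff₀ hD₀]; exact (hrt n).1
    calc T n x ≤ D * T n zpt := comparable n x zpt
      _ ≤ D * (D * r ^ n) := mul_le_mul_of_nonneg_left h hD₀.le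
      _ = D ^ 2 * r ^ n := by ring

lemma exists_eigenfunction_of_tendsto {r a b : ℝ} {A : ℕ → Sig → ℝ}
    (hA_cone : ∀ N, A N ∈ distortionCone β H)
    (hA_bdd : ∀ᶠ N in atTop, A N ∈ Icc (fun _ => a) (fun _ => b))
    (hA_eig : Tendsto (fun N => transferₗ β H (A N) - r • A N) atTop (𝓝 0)) :
    ∃ Φ ∈ distortionCone β H, Φ ∈ Icc (fun _ => a) (fun _ => b) ∧ transferₗ β H Φ = r • Φ := by
  obtain ⟨U, hU⟩ := exists_ultrafilter_le (atTop : Filter ℕ)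
  obtain ⟨Φ, hΦ, hlim⟩ := isCompact_Icc.ultrafilter_le_nhds (U.map A) (by
    rw [Ultrafilter.coe_map, le_principal_iff]
    exact hU hA_bdd)
  have hA : Tendsto A U (𝓝 Φ) := by rwa [Tendsto, ← Ultrafilter.coe_map]
  refine ⟨Φ, isClosed_distortionCone.mem_of_tendsto hA (Eventually.of_forall hA_cone), hΦ, ?_⟩
  have h := (((continuous_transfer (β := β) (H := H)).tendsto Φ).comp hA).sub (hA.const_smul r)
  exact sub_eq_zero.1 (tendsto_nhds_unique h (hA_eig.mono_left hU))

noncomputable def normalizedIterate (β : ℝ) (H : Sig → ℝ) (r : ℝ) (n : ℕ) : Sig → ℝ :=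
  (r ^ n)⁻¹ • (transferₗ β H ^ n) 1

lemma transferₗ_normalizedIterate {r : ℝ} (hr : r ≠ 0) (n : ℕ) :
    transferₗ β H (normalizedIterate β H r n) = r • normalizedIterate β H r (n + 1) := by
  rw [normalizedIterate, normalizedIterate, map_smul, ← Module.End.mul_apply, ← pow_succ',
    smul_smul]
  congr 1
  field_simp
  ring

lemma transferₗ_cesaro_sub {r : ℝ} (hr : r ≠ 0) (N : ℕ) :
    transferₗ β H ((N : ℝ)⁻¹ • ∑ n ∈ Finset.range N, normalizedIterate β H r n)
      - r • ((N : ℝ)⁻¹ • ∑ n ∈ Finset.range N, normalizedIterate β H r n)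
      = (r / N) • (normalizedIterate β H r N - normalizedIterate β H r 0) := by
  rw [map_smul, map_sum, smul_comm r, ← smul_sub, Finset.smul_sum, ← Finset.sum_sub_distrib]
  simp only [transferₗ_normalizedIterate hr, ← smul_sub]
  rw [← Finset.smul_sum, Finset.sum_range_sub, smul_smul, div_eq_inv_mul]

lemma exists_eigenfunction_of_growth (hH : Continuous H) (hv : SummableVar H) {r c : ℝ}
    (hr : 0 < r) (hc : 0 < c)
    (hT : ∀ n x, r ^ n ≤ c * (transferₗ β H ^ n) 1 x ∧ (transferₗ β H ^ n) 1 x ≤ c * r ^ n) :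
    ∃ Φ ∈ distortionCone β H, Φ ∈ Icc (fun _ => c⁻¹) (fun _ => c) ∧
      transferₗ β H Φ = r • Φ := by
  set P := normalizedIterate β H r
  have hP : ∀ n, P n ∈ Icc (fun _ => c⁻¹) (fun _ => c) := fun n => by
    refine ⟨fun x => ?_, fun x => ?_⟩
    · simp only [P, normalizedIterate]
      rw [Pi.smul_apply, smul_eq_mul, le_inv_mul_iff₀ (by positivity), mul_inv_le_iff₀ hc,
        mul_comm]
      exact (hT n x).1
    · simp only [P, normalizedIterate]
      rw [Pi.smul_apply, smul_eq_mul, inv_mul_le_iff₀ (by positivity), mul_comm]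
      exact (hT n x).2
  refine exists_eigenfunction_of_tendsto (A := fun N => (N : ℝ)⁻¹ • ∑ n ∈ Finset.range N, P n)
    (fun N => smul_mem_distortionCone (sum_mem_distortionCone fun n _ =>
      smul_mem_distortionCone (transferₗ_pow_one_mem_distortionCone hH hv n) (by positivity))
      (by positivity)) ?_ ?_
  · filter_upwards [eventually_ge_atTop 1] with N hN
    rw [Finset.smul_sum]
    refine (convex_Icc _ _).sum_mem (fun _ _ => by positivity) ?_ fun n _ => hP n
    rw [Finset.sum_const, Finset.card_range, nsmul_eq_mul, mul_inv_cancel₀ (by positivity)]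
  · refine (tendsto_congr fun N => transferₗ_cesaro_sub hr.ne' N).2 ?_
    refine tendsto_pi_nhds.2 fun x => squeeze_zero_norm (fun N => ?_)
      (tendsto_const_div_atTop_nhds_zero_nat (r * c))
    rw [Pi.smul_apply, Pi.sub_apply, smul_eq_mul, norm_mul, Real.norm_eq_abs, Real.norm_eq_abs,
      abs_of_nonneg (by positivity), mul_div_right_comm]
    exact mul_le_mul_of_nonneg_left (abs_sub_le_of_nonneg_of_le
      ((inv_pos.2 hc).le.trans ((hP N).1 x)) ((hP N).2 x)
      ((inv_pos.2 hc).le.trans ((hP 0).1 x)) ((hP 0).2 x)) (by positivity)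

theorem exists_pos_eigenfunction (hH : Continuous H) (hv : SummableVar H) :
    ∃ r : ℝ, 0 < r ∧ ∃ Φ : Sig → ℝ, Continuous Φ ∧ (∀ x, 0 < Φ x) ∧ transferₗ β H Φ = r • Φ := by
  obtain ⟨r, hr, c, hc, hT⟩ := exists_growth_rate hH hv
  obtain ⟨Φ, hcone, ⟨hlow, hupp⟩, heig⟩ := exists_eigenfunction_of_growth hH hv hr hc hT
  exact ⟨r, hr, Φ, continuous_of_mem_distortionCone hcone hupp,
    fun x => (inv_pos.2 hc).trans_le (hlow x), heig⟩

end Eigenfunction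

section Uniqueness

variable {β : ℝ} {H : Sig → ℝ}

lemma exists_le_smul_of_pos {f g : Sig → ℝ} (hf : Continuous f) (hg : Continuous g)
    (hg₀ : ∀ x, 0 < g x) : ∃ C : ℝ, f ≤ C • g := by
  obtain ⟨C, hC⟩ := (isCompact_range (hf.div hg fun x => (hg₀ x).ne')).bddAbove
  refine ⟨C, fun x => ?_⟩
  have h := hC ⟨x, rfl⟩
  rw [Pi.div_apply, div_le_iff₀ (hg₀ x)] at h
  exact h

lemma eigenvalue_le_of_le_smul {f g : Sig → ℝ} {r s C : ℝ} (hf : ∀ x, 0 < f x) (hs : 0 < s)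
    (hfg : f ≤ C • g) (hLf : transferₗ β H f = r • f) (hLg : transferₗ β H g = s • g) :
    r ≤ s := by
  by_contra! hsr
  obtain ⟨n, hn⟩ := pow_unbounded_of_one_lt (C * g zpt / f zpt) ((one_lt_div hs).2 hsr)
  have h := monotone_transferₗ_pow (β := β) (H := H) n hfg zpt
  rw [map_smul, transferₗ_pow_eigen hLf, transferₗ_pow_eigen hLg] at h
  simp only [Pi.smul_apply, smul_eq_mul] at h
  rw [div_pow, lt_div_iff₀ (by positivity), div_mul_eq_mul_div, div_lt_iff₀ (hf zpt)] at hn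
  linarith

lemma eigenvalue_eq_of_pos {f g : Sig → ℝ} {r s : ℝ} (hr : 0 < r) (hs : 0 < s)
    (hfc : Continuous f) (hf : ∀ x, 0 < f x) (hgc : Continuous g) (hg : ∀ x, 0 < g x)
    (hLf : transferₗ β H f = r • f) (hLg : transferₗ β H g = s • g) : r = s := by
  obtain ⟨C, hC⟩ := exists_le_smul_of_pos hfc hgc hg
  obtain ⟨C', hC'⟩ := exists_le_smul_of_pos hgc hfc hf
  exact le_antisymm (eigenvalue_le_of_le_smul hf hs hC hLf hLg)
    (eigenvalue_le_of_le_smul hg hr hC' hLg hLf)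

lemma apply_cons2_eq_zero_of_eigen {ψ : Sig → ℝ} {r : ℝ} (hψ : 0 ≤ ψ)
    (hLψ : transferₗ β H ψ = r • ψ) {z : Sig} (hz : ψ z = 0) (i : Fin 2) :
    ψ (cons2 i z) = 0 := by
  have h := congrFun hLψ z
  simp only [transferₗ_apply, transfer, Pi.smul_apply, hz, smul_zero] at h
  rw [add_eq_zero_iff_of_nonneg (mul_nonneg (Real.exp_pos _).le (hψ _))
    (mul_nonneg (Real.exp_pos _).le (hψ _))] at h
  fin_cases i
  · exact (mul_eq_zero.1 h.1).resolve_left (Real.exp_ne_zero _)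
  · exact (mul_eq_zero.1 h.2).resolve_left (Real.exp_ne_zero _)

lemma eq_smul_of_eigen_of_pos {Φ Φ' : Sig → ℝ} {r : ℝ} (hΦc : Continuous Φ)
    (hΦ : ∀ x, 0 < Φ x) (hΦ'c : Continuous Φ') (hΦ' : ∀ x, 0 < Φ' x)
    (hLΦ : transferₗ β H Φ = r • Φ) (hLΦ' : transferₗ β H Φ' = r • Φ') :
    ∃ s : ℝ, 0 < s ∧ Φ' = s • Φ := by
  obtain ⟨x₀, -, hx₀⟩ := isCompact_univ.exists_isMinOn univ_nonempty
    (hΦ'c.div hΦc fun x => (hΦ x).ne').continuousOn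
  set s := Φ' x₀ / Φ x₀
  set ψ := Φ' - s • Φ
  have hψ : 0 ≤ ψ := fun x => by
    have h : s ≤ Φ' x / Φ x := hx₀ (mem_univ x)
    rw [le_div_iff₀ (hΦ x)] at h
    simpa [ψ, sub_nonneg] using h
  have hψx₀ : ψ x₀ = 0 := by simp [ψ, s, div_mul_cancel₀ _ (hΦ x₀).ne']
  have hLψ : transferₗ β H ψ = r • ψ := by
    rw [map_sub, map_smul, hLΦ, hLΦ', smul_sub, smul_comm r s]
  have hzero : {x | ψ x = 0} = univ :=
    eq_univ_of_isClosed_of_cons2_mem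
      (isClosed_eq (hΦ'c.sub (hΦc.const_smul s)) continuous_const) ⟨x₀, hψx₀⟩
      fun i _ hz => apply_cons2_eq_zero_of_eigen hψ hLψ hz i
  refine ⟨s, div_pos (hΦ' x₀) (hΦ x₀), funext fun x => ?_⟩
  have h : ψ x = 0 := eq_univ_iff_forall.1 hzero x
  simpa [ψ, sub_eq_zero] using h

lemma exists_isGreatest_range_smul {f : Sig → ℝ} (hf : Continuous f) (hf₀ : ∀ x, 0 < f x) :
    ∃ s : ℝ, 0 < s ∧ IsGreatest (range (s • f)) 1 := by
  obtain ⟨x₀, -, hx₀⟩ := isCompact_univ.exists_isMaxOn univ_nonempty hf.continuousOn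
  refine ⟨(f x₀)⁻¹, inv_pos.2 (hf₀ x₀), ⟨x₀, inv_mul_cancel₀ (hf₀ x₀).ne'⟩,
    forall_mem_range.2 fun x => ?_⟩
  rw [Pi.smul_apply, smul_eq_mul, inv_mul_le_iff₀ (hf₀ x₀), mul_one]
  exact hx₀ (mem_univ x)

end Uniqueness

theorem stmt_0_general (H : Sig → ℝ) (hHc : Continuous H) (hHv : SummableVar H)
    (β : ℝ) :
    ∃ (lam : ℝ) (Φ : Sig → ℝ), 0 < lam ∧ Continuous Φ ∧ (∀ x, 0 < Φ x) ∧
      IsGreatest (Set.range Φ) 1 ∧ (transfer β H Φ = fun x => lam * Φ x) ∧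
      ∀ (lam' : ℝ) (Φ' : Sig → ℝ), 0 < lam' → Continuous Φ' → (∀ x, 0 < Φ' x) →
        (transfer β H Φ' = fun x => lam' * Φ' x) →
        lam' = lam ∧ ∃ s : ℝ, 0 < s ∧ Φ' = fun x => s * Φ x := by
  obtain ⟨r, hr, Φ₀, hΦ₀c, hΦ₀, hLΦ₀⟩ := exists_pos_eigenfunction (β := β) hHc hHv
  obtain ⟨s, hs, hmax⟩ := exists_isGreatest_range_smul hΦ₀c hΦ₀
  have hΦc : Continuous (s • Φ₀) := hΦ₀c.const_smul s
  have hΦ : ∀ x, 0 < (s • Φ₀) x := fun x => mul_pos hs (hΦ₀ x)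
  have hLΦ : transferₗ β H (s • Φ₀) = r • s • Φ₀ := by rw [map_smul, hLΦ₀, smul_comm]
  refine ⟨r, s • Φ₀, hr, hΦc, hΦ, hmax, hLΦ, fun r' Φ' hr' hΦ'c hΦ' hLΦ' => ?_⟩
  obtain rfl : r' = r := eigenvalue_eq_of_pos hr' hr hΦ'c hΦ' hΦc hΦ hLΦ' hLΦ
  exact ⟨rfl, eq_smul_of_eigen_of_pos hΦc hΦ hΦ'c hΦ' hLΦ hLΦ'⟩

/-- existence and uniqueness of the positive continuous eigenfunction of the
transfer operator, for a potential of summable variation. -/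
theorem stmt_0 (H : Sig → ℝ) (hHc : Continuous H) (hHv : SummableVar H)
    (β : ℝ) (hβ : 0 < β) :
    ∃ (lam : ℝ) (Φ : Sig → ℝ), 0 < lam ∧ Continuous Φ ∧ (∀ x, 0 < Φ x) ∧
      IsGreatest (Set.range Φ) 1 ∧ (transfer β H Φ = fun x => lam * Φ x) ∧
      ∀ (lam' : ℝ) (Φ' : Sig → ℝ), 0 < lam' → Continuous Φ' → (∀ x, 0 < Φ' x) →
        (transfer β H Φ' = fun x => lam' * Φ' x) →
        lam' = lam ∧ ∃ s : ℝ, 0 < s ∧ Φ' = fun x => s * Φ x :=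
  stmt_0_general H hHc hHv β
end

section
/- Let H : Σ → ℝ be continuous with summable variation. For each β > 0, the Gibbs measure μ_β := Φ_β ν_β / ∫ Φ_β dν_β is a σ-invariant Borel probability measure on Σ, and any weak* accumulation point of (μ_β) as β → +∞ (i.e. any weak* limit of μ_{β_j} along a sequence β_j → +∞) is a minimizing measure of H. -/
open MeasureTheory Filter Topology

/-! The potential `β H + log λ_β` is cohomologous to `-log p`, where
`p_i(y) = e^{-β H(iy)} Φ_β(iy) / (λ_β Φ_β(y))` are the transition probabilities of `μ_β`
(`p_0 + p_1 = 1` is the eigen-equation). Integrating against an invariant `ρ` gives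
`β ∫ H dρ + log λ_β = ∫ -log p dρ ≥ 0`. Since `μ_β` is fixed by the dual of the normalized
transfer operator, integrating against `μ_β` gives the average binary entropy of `p`, at most
`log 2`. Hence `∫ H dμ_β ≤ ∫ H dρ + log 2 / β`, and this bound passes to weak* limits, which
are again invariant probability measures. -/

section InvariantMeasures

variable {Ω : Type*} [MeasurableSpace Ω]

theorem integral_comp_sub_eq_zero {T : Ω → Ω} {ρ : Measure Ω} (hT : MeasurePreserving T ρ ρ)
    {u : Ω → ℝ} (hu : Integrable u ρ) : ∫ x, (u (T x) - u x) ∂ρ = 0 := by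
  have huT : Integrable (fun x => u (T x)) ρ := hT.integrable_comp_of_integrable hu
  have hu' : AEStronglyMeasurable u (ρ.map T) := by rw [hT.map_eq]; exact hu.aestronglyMeasurable
  rw [integral_sub huT hu, ← integral_map hT.aemeasurable hu', hT.map_eq, sub_self]

theorem map_eq_of_forall_integral_comp_eq [TopologicalSpace Ω] [BorelSpace Ω]
    [HasOuterApproxClosed Ω] {T : Ω → Ω} (hT : Continuous T) {ρ : Measure Ω} [IsFiniteMeasure ρ]
    (h : ∀ f : Ω → ℝ, Continuous f → ∫ x, f (T x) ∂ρ = ∫ x, f x ∂ρ) : ρ.map T = ρ := by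
  refine ext_of_forall_integral_eq_of_IsFiniteMeasure fun f => ?_
  rw [integral_map hT.aemeasurable f.continuous.aestronglyMeasurable]
  exact h f f.continuous

theorem isProbabilityMeasure_of_integral_one {m : Measure Ω} (h : ∫ _, (1 : ℝ) ∂m = 1) :
    IsProbabilityMeasure m :=
  ⟨(ENNReal.toReal_eq_one_iff _).mp (by simpa [Measure.real] using h)⟩

variable {ι : Type*} {l : Filter ι} [l.NeBot] {μs : ι → Measure Ω} {m : Measure Ω}

theorem isProbabilityMeasure_of_tendsto_integral [TopologicalSpace Ω]
    (hμs : ∀ᶠ i in l, IsProbabilityMeasure (μs i))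
    (hm : ∀ f : Ω → ℝ, Continuous f → Tendsto (fun i => ∫ x, f x ∂μs i) l (𝓝 (∫ x, f x ∂m))) :
    IsProbabilityMeasure m :=
  isProbabilityMeasure_of_integral_one <| tendsto_nhds_unique (hm _ continuous_const)
    (tendsto_const_nhds.congr' <| hμs.mono fun i hi => by simp)

theorem map_eq_of_tendsto_integral [TopologicalSpace Ω] [BorelSpace Ω] [HasOuterApproxClosed Ω]
    {T : Ω → Ω} (hT : Continuous T) [IsFiniteMeasure m] (hμs : ∀ᶠ i in l, (μs i).map T = μs i)
    (hm : ∀ f : Ω → ℝ, Continuous f → Tendsto (fun i => ∫ x, f x ∂μs i) l (𝓝 (∫ x, f x ∂m))) :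
    m.map T = m := by
  refine map_eq_of_forall_integral_comp_eq hT fun f hf => tendsto_nhds_unique
    ((hm (fun x => f (T x)) (hf.comp hT)).congr' (hμs.mono fun i hi => ?_)) (hm f hf)
  rw [← integral_map hT.aemeasurable hf.aestronglyMeasurable, hi]

end InvariantMeasures

theorem continuous_shft : Continuous shft := continuous_pi fun n => continuous_apply (n + 1)

theorem shft_cons2 (i : Fin 2) (y : Sig) : shft (cons2 i y) = y := rfl

theorem cons2_head_shft (x : Sig) : cons2 (x 0) (shft x) = x := by
  funext n; cases n <;> rfl

theorem integral_inv_smul_withDensity_ofReal {X : Type*} [MeasurableSpace X] {ν : Measure X}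
    {Φ : X → ℝ} (hΦ : Measurable Φ) (hΦ0 : ∀ x, 0 ≤ Φ x) (f : X → ℝ) :
    ∫ x, f x ∂((ENNReal.ofReal (∫ x, Φ x ∂ν))⁻¹ • ν.withDensity fun x => ENNReal.ofReal (Φ x)) =
      (∫ x, Φ x ∂ν)⁻¹ * ∫ x, f x * Φ x ∂ν := by
  rw [integral_smul_measure, integral_withDensity_eq_integral_toReal_smul hΦ.ennreal_ofReal
    (ae_of_all _ fun _ => ENNReal.ofReal_lt_top), ENNReal.toReal_inv,
    ENNReal.toReal_ofReal (integral_nonneg hΦ0), smul_eq_mul]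
  simp_rw [ENNReal.toReal_ofReal (hΦ0 _), smul_eq_mul, mul_comm (Φ _)]

/-- The transition probability `p_i(y)` from `y` to its preimage `i y` under `μ`. -/
noncomputable def gibbsWeight (β : ℝ) (H Φ : Sig → ℝ) (lam : ℝ) (i : Fin 2) (y : Sig) : ℝ :=
  Real.exp (-β * H (cons2 i y)) * Φ (cons2 i y) / (lam * Φ y)

noncomputable def normTransfer (β : ℝ) (H Φ : Sig → ℝ) (lam : ℝ) (f : Sig → ℝ) (y : Sig) : ℝ :=
  ∑ i : Fin 2, gibbsWeight β H Φ lam i y * f (cons2 i y)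

theorem normTransfer_eq (β : ℝ) (H Φ : Sig → ℝ) (lam : ℝ) (f : Sig → ℝ) (y : Sig) :
    normTransfer β H Φ lam f y = transfer β H (fun x => f x * Φ x) y / (lam * Φ y) := by
  simp only [normTransfer, gibbsWeight, transfer, Fin.sum_univ_two]
  ring

/-- The logarithm of the Jacobian of `μ` along the shift, `-log p_{x_0}(σ x)` by
`logJacobian_cons2`. -/
noncomputable def logJacobian (β : ℝ) (H Φ : Sig → ℝ) (lam : ℝ) (x : Sig) : ℝ :=
  β * H x + (Real.log (Φ (shft x)) - Real.log (Φ x)) + Real.log lam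

namespace GibbsData

variable {H : Sig → ℝ} {β : ℝ} {Φ : Sig → ℝ} {lam : ℝ} {ν μ : Measure Sig}

theorem integral_eq_inv_mul_integral_mul (hG : GibbsData H β Φ lam ν μ) (f : Sig → ℝ) :
    ∫ x, f x ∂μ = (∫ x, Φ x ∂ν)⁻¹ * ∫ x, f x * Φ x ∂ν := by
  obtain ⟨hΦc, hΦpos, -, -, -, -, -, rfl⟩ := hG
  exact integral_inv_smul_withDensity_ofReal hΦc.measurable (fun x => (hΦpos x).le) f

theorem isProbabilityMeasure (hG : GibbsData H β Φ lam ν μ) : IsProbabilityMeasure μ := by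
  refine isProbabilityMeasure_of_integral_one ?_
  rw [hG.integral_eq_inv_mul_integral_mul]
  obtain ⟨hΦc, hΦpos, -, -, -, hν, -, -⟩ := hG
  have hsupp : Function.support Φ = Set.univ := Set.eq_univ_of_forall fun x => (hΦpos x).ne'
  have hΦint : 0 < ∫ x, Φ x ∂ν :=
    (integral_pos_iff_support_of_nonneg (fun x => (hΦpos x).le)
      (hΦc.integrable_of_hasCompactSupport (.of_compactSpace Φ))).mpr (by simp [hsupp])
  simp [inv_mul_eq_one₀ hΦint.ne']

theorem gibbsWeight_pos (hG : GibbsData H β Φ lam ν μ) (i : Fin 2) (y : Sig) :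
    0 < gibbsWeight β H Φ lam i y := by
  obtain ⟨-, hΦpos, -, hlam, -⟩ := hG
  unfold gibbsWeight
  have := hΦpos y
  have := hΦpos (cons2 i y)
  positivity

theorem sum_gibbsWeight (hG : GibbsData H β Φ lam ν μ) (y : Sig) :
    ∑ i : Fin 2, gibbsWeight β H Φ lam i y = 1 := by
  obtain ⟨-, hΦpos, -, hlam, heig, -⟩ := hG
  have := congrFun heig y
  simp only [gibbsWeight, transfer, Fin.sum_univ_two] at this ⊢
  rw [← add_div, this, div_self (mul_pos hlam (hΦpos y)).ne']

theorem gibbsWeight_le_one (hG : GibbsData H β Φ lam ν μ) (i : Fin 2) (y : Sig) :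
    gibbsWeight β H Φ lam i y ≤ 1 :=
  hG.sum_gibbsWeight y ▸ Finset.single_le_sum (fun j _ => (hG.gibbsWeight_pos j y).le)
    (Finset.mem_univ i)

theorem integral_normTransfer (hG : GibbsData H β Φ lam ν μ) {f : Sig → ℝ} (hf : Continuous f) :
    ∫ y, normTransfer β H Φ lam f y ∂μ = ∫ y, f y ∂μ := by
  rw [hG.integral_eq_inv_mul_integral_mul, hG.integral_eq_inv_mul_integral_mul]
  obtain ⟨hΦc, hΦpos, -, hlam, -, -, hνeig, -⟩ := hG
  congr 1
  have hstep : ∀ y, normTransfer β H Φ lam f y * Φ y =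
      lam⁻¹ * transfer β H (fun x => f x * Φ x) y := by
    intro y
    rw [normTransfer_eq]
    field_simp [hlam.ne', (hΦpos y).ne']
  simp_rw [hstep, integral_const_mul]
  rw [hνeig (fun x => f x * Φ x) (hf.mul hΦc), inv_mul_cancel_left₀ hlam.ne']

theorem normTransfer_comp_shft (hG : GibbsData H β Φ lam ν μ) (f : Sig → ℝ) (y : Sig) :
    normTransfer β H Φ lam (fun x => f (shft x)) y = f y := by
  simp only [normTransfer, shft_cons2, ← Finset.sum_mul, hG.sum_gibbsWeight, one_mul]

theorem map_shft (hG : GibbsData H β Φ lam ν μ) : μ.map shft = μ := by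
  have := hG.isProbabilityMeasure
  refine map_eq_of_forall_integral_comp_eq continuous_shft fun f hf => ?_
  rw [← hG.integral_normTransfer (f := fun x => f (shft x)) (hf.comp continuous_shft)]
  simp only [hG.normTransfer_comp_shft]

theorem continuous_logJacobian (hHc : Continuous H) (hG : GibbsData H β Φ lam ν μ) :
    Continuous (logJacobian β H Φ lam) := by
  obtain ⟨hΦc, hΦpos, -⟩ := hG
  have hlog : Continuous fun x => Real.log (Φ x) := hΦc.log fun x => (hΦpos x).ne'
  unfold logJacobian
  exact ((continuous_const.mul hHc).add ((hlog.comp continuous_shft).sub hlog)).add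
    continuous_const

theorem logJacobian_cons2 (hG : GibbsData H β Φ lam ν μ) (i : Fin 2) (y : Sig) :
    logJacobian β H Φ lam (cons2 i y) = -Real.log (gibbsWeight β H Φ lam i y) := by
  obtain ⟨-, hΦpos, -, hlam, -⟩ := hG
  simp only [logJacobian, gibbsWeight, shft_cons2]
  rw [Real.log_div (mul_pos (Real.exp_pos _) (hΦpos _)).ne' (mul_pos hlam (hΦpos y)).ne',
    Real.log_mul (Real.exp_pos _).ne' (hΦpos _).ne', Real.log_exp,
    Real.log_mul hlam.ne' (hΦpos y).ne']
  ring

theorem logJacobian_nonneg (hG : GibbsData H β Φ lam ν μ) (x : Sig) :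
    0 ≤ logJacobian β H Φ lam x := by
  rw [← cons2_head_shft x, hG.logJacobian_cons2, neg_nonneg]
  exact Real.log_nonpos (hG.gibbsWeight_pos _ _).le (hG.gibbsWeight_le_one _ _)

theorem normTransfer_logJacobian (hG : GibbsData H β Φ lam ν μ) (y : Sig) :
    normTransfer β H Φ lam (logJacobian β H Φ lam) y =
      Real.binEntropy (gibbsWeight β H Φ lam 0 y) := by
  have hp1 : 1 - gibbsWeight β H Φ lam 0 y = gibbsWeight β H Φ lam 1 y := by
    rw [← hG.sum_gibbsWeight y, Fin.sum_univ_two, add_sub_cancel_left]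
  simp only [normTransfer, Fin.sum_univ_two, hG.logJacobian_cons2, Real.binEntropy, hp1,
    Real.log_inv]

theorem integral_logJacobian (hHc : Continuous H) (hG : GibbsData H β Φ lam ν μ)
    {ρ : Measure Sig} [IsProbabilityMeasure ρ] (hρ : ρ.map shft = ρ) :
    ∫ x, logJacobian β H Φ lam x ∂ρ = β * ∫ x, H x ∂ρ + Real.log lam := by
  obtain ⟨hΦc, hΦpos, -⟩ := hG
  have hlog : Continuous fun x => Real.log (Φ x) := hΦc.log fun x => (hΦpos x).ne'
  have hint {f : Sig → ℝ} (hf : Continuous f) : Integrable f ρ :=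
    hf.integrable_of_hasCompactSupport (.of_compactSpace f)
  have hcob := integral_comp_sub_eq_zero ⟨continuous_shft.measurable, hρ⟩ (hint hlog)
  have hβH : Integrable (fun x => β * H x) ρ := hint (continuous_const.mul hHc)
  have hΦcob : Integrable (fun x => Real.log (Φ (shft x)) - Real.log (Φ x)) ρ :=
    hint ((hlog.comp continuous_shft).sub hlog)
  have hsum : Integrable (fun x => β * H x + (Real.log (Φ (shft x)) - Real.log (Φ x))) ρ :=
    hβH.add hΦcob
  unfold logJacobian
  rw [integral_add hsum (integrable_const _), integral_add hβH hΦcob, hcob,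
    integral_const_mul]
  simp

theorem log_le_log_two_sub (hHc : Continuous H) (hG : GibbsData H β Φ lam ν μ) :
    Real.log lam ≤ Real.log 2 - β * ∫ x, H x ∂μ := by
  have := hG.isProbabilityMeasure
  have hJ := hG.continuous_logJacobian hHc
  have : ∫ x, logJacobian β H Φ lam x ∂μ ≤ Real.log 2 := by
    rw [← hG.integral_normTransfer hJ]
    simp_rw [hG.normTransfer_logJacobian]
    calc ∫ y, Real.binEntropy (gibbsWeight β H Φ lam 0 y) ∂μ ≤ ∫ _, Real.log 2 ∂μ :=
          integral_mono_of_nonneg (ae_of_all _ fun y => Real.binEntropy_nonneg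
            (hG.gibbsWeight_pos 0 y).le (hG.gibbsWeight_le_one 0 y)) (integrable_const _)
            (ae_of_all _ fun _ => Real.binEntropy_le_log_two)
      _ = Real.log 2 := by simp
  rw [hG.integral_logJacobian hHc hG.map_shft] at this
  linarith

theorem neg_mul_integral_le_log (hHc : Continuous H) (hG : GibbsData H β Φ lam ν μ)
    {ρ : Measure Sig} [IsProbabilityMeasure ρ] (hρ : ρ.map shft = ρ) :
    -(β * ∫ x, H x ∂ρ) ≤ Real.log lam := by
  have := integral_nonneg (μ := ρ) (f := logJacobian β H Φ lam) hG.logJacobian_nonneg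
  rw [hG.integral_logJacobian hHc hρ] at this
  linarith

theorem integral_le_integral_add_log_two_div (hHc : Continuous H) (hβ : 0 < β)
    (hG : GibbsData H β Φ lam ν μ) {ρ : Measure Sig} [IsProbabilityMeasure ρ]
    (hρ : ρ.map shft = ρ) :
    ∫ x, H x ∂μ ≤ ∫ x, H x ∂ρ + Real.log 2 / β := by
  have h1 := hG.log_le_log_two_sub hHc
  have h2 := hG.neg_mul_integral_le_log hHc hρ
  rw [← sub_le_iff_le_add', ← mul_le_mul_iff_of_pos_left hβ, mul_sub, mul_div_cancel₀ _ hβ.ne']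
  linarith

end GibbsData

theorem stmt_3_general (H : Sig → ℝ) (hHc : Continuous H)
    (Φ : ℝ → Sig → ℝ) (lam : ℝ → ℝ) (ν μ : ℝ → Measure Sig)
    (hG : ∀ β : ℝ, 0 < β → GibbsData H β (Φ β) (lam β) (ν β) (μ β)) :
    (∀ β : ℝ, 0 < β → IsProbabilityMeasure (μ β) ∧ (μ β).map shft = μ β) ∧
    ∀ (βj : ℕ → ℝ) (m : Measure Sig), Tendsto βj atTop atTop →
      (∀ f : Sig → ℝ, Continuous f →
        Tendsto (fun j => ∫ x, f x ∂(μ (βj j))) atTop (𝓝 (∫ x, f x ∂m))) →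
      IsMinimizing H m := by
  refine ⟨fun β hβ => ⟨(hG β hβ).isProbabilityMeasure, (hG β hβ).map_shft⟩, ?_⟩
  intro βj m hβj hm
  have hpos : ∀ᶠ j in atTop, 0 < βj j := hβj.eventually_gt_atTop 0
  have := isProbabilityMeasure_of_tendsto_integral
    (hpos.mono fun j hj => (hG _ hj).isProbabilityMeasure) hm
  refine ⟨this, map_eq_of_tendsto_integral continuous_shft
    (hpos.mono fun j hj => (hG _ hj).map_shft) hm, fun ρ _ hρ => ?_⟩
  have hbound : Tendsto (fun j => ∫ x, H x ∂ρ + Real.log 2 / βj j) atTop (𝓝 (∫ x, H x ∂ρ)) := by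
    simpa [div_eq_mul_inv] using
      tendsto_const_nhds.add (hβj.inv_tendsto_atTop.const_mul (Real.log 2))
  exact le_of_tendsto_of_tendsto (hm H hHc) hbound <| hpos.mono fun j hj =>
    (hG _ hj).integral_le_integral_add_log_two_div hHc hj hρ

/-- the Gibbs measures `μ_β` are shift-invariant probability measures, and any
weak* accumulation point as `β → +∞` is a minimizing measure of `H`. -/
theorem stmt_3 (H : Sig → ℝ) (hHc : Continuous H) (hHv : SummableVar H)
    (Φ : ℝ → Sig → ℝ) (lam : ℝ → ℝ) (ν μ : ℝ → Measure Sig)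
    (hG : ∀ β : ℝ, 0 < β → GibbsData H β (Φ β) (lam β) (ν β) (μ β)) :
    (∀ β : ℝ, 0 < β → IsProbabilityMeasure (μ β) ∧ (μ β).map shft = μ β) ∧
    ∀ (βj : ℕ → ℝ) (m : Measure Sig), Tendsto βj atTop atTop →
      (∀ f : Sig → ℝ, Continuous f →
        Tendsto (fun j => ∫ x, f x ∂(μ (βj j))) atTop (𝓝 (∫ x, f x ∂m))) →
      IsMinimizing H m :=
  stmt_3_general H hHc Φ lam ν μ hG
end

section
/- Let H : Σ → ℝ be a double-well type potential with data a_n^0, a_n^1, b_n^0, b_n^1. Then there exists a bounded Borel function V : Σ → ℝ that is constant on each cylinder [0^n 1] and [1^n 0] (n ≥ 1) such that H̃ := H − (V∘σ − V) is a reduced double-well type potential; more precisely, H̃ = 0 on [00] ∪ [11], H̃ = b_n^0 + Σ_{k=1}^{n−1} a_k^1 on each cylinder [0 1^n 0], and H̃ = b_n^1 + Σ_{k=1}^{n−1} a_k^0 on each cylinder [1 0^n 1]. -/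
open MeasureTheory Filter Topology

section Stmt8Aux

lemma fin2cases (i : Fin 2) : i = 0 ∨ i = 1 := by revert i; decide

/-- partial sum `Σ_{k=1}^{n-1} a k`. -/
noncomputable def psum (a : ℕ → ℝ) (n : ℕ) : ℝ := ∑ k ∈ Finset.Ico 1 n, a k

/-- full sum `Σ_{k≥1} a k`. -/
noncomputable def lsum (a : ℕ → ℝ) : ℝ := ∑' k : ℕ, a (k + 1)

open Classical in
/-- The conjugating function `V`. -/
noncomputable def Vdw (a0 a1 : ℕ → ℝ) (x : Sig) : ℝ :=
  if h : ∃ n, x n ≠ x 0 then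
    (if x 0 = 0 then -psum a0 (Nat.find h) else -psum a1 (Nat.find h))
  else (if x 0 = 0 then -lsum a0 else -lsum a1)

lemma psum_succ (a : ℕ → ℝ) {n : ℕ} (hn : 1 ≤ n) :
    psum a (n + 1) = psum a n + a n := Finset.sum_Ico_succ_top hn a

lemma psum_one (a : ℕ → ℝ) : psum a 1 = 0 := by simp [psum]

lemma psum_eq_range (a : ℕ → ℝ) (n : ℕ) :
    psum a (n + 1) = ∑ k ∈ Finset.range n, a (k + 1) := by
  rw [psum, Finset.sum_Ico_eq_sum_range]
  exact Finset.sum_congr (by rw [Nat.add_sub_cancel]) fun k _ => by rw [Nat.add_comm]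

lemma psum_nonneg (a : ℕ → ℝ) (ha : ∀ n, 1 ≤ n → 0 ≤ a n) (n : ℕ) : 0 ≤ psum a n :=
  Finset.sum_nonneg fun k hk => ha k (Finset.mem_Ico.1 hk).1

lemma psum_mono (a : ℕ → ℝ) (ha : ∀ n, 1 ≤ n → 0 ≤ a n) {m n : ℕ} (h : m ≤ n) :
    psum a m ≤ psum a n :=
  Finset.sum_le_sum_of_subset_of_nonneg (Finset.Ico_subset_Ico le_rfl h)
    (fun k hk _ => ha k (Finset.mem_Ico.1 hk).1)

lemma summable_shift (a : ℕ → ℝ) (ha : ∀ n, 1 ≤ n → 0 ≤ a n)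
    (hs : Summable fun n : ℕ => ((n + 1 : ℕ) : ℝ) * a (n + 1)) :
    Summable fun k : ℕ => a (k + 1) := by
  apply Summable.of_nonneg_of_le (fun k => ha _ (by omega)) (fun k => ?_) hs
  have h0 : 0 ≤ a (k + 1) := ha _ (by omega)
  have h1 : (1 : ℝ) ≤ ((k + 1 : ℕ) : ℝ) := by exact_mod_cast Nat.succ_le_succ (Nat.zero_le k)
  nlinarith

lemma lsum_nonneg (a : ℕ → ℝ) (ha : ∀ n, 1 ≤ n → 0 ≤ a n) : 0 ≤ lsum a :=
  tsum_nonneg fun k => ha _ (by omega)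

lemma psum_le_lsum (a : ℕ → ℝ) (ha : ∀ n, 1 ≤ n → 0 ≤ a n)
    (hs : Summable fun n : ℕ => ((n + 1 : ℕ) : ℝ) * a (n + 1)) (n : ℕ) :
    psum a n ≤ lsum a := by
  cases n with
  | zero => simpa [psum] using lsum_nonneg a ha
  | succ m =>
    rw [psum_eq_range]
    exact Summable.sum_le_tsum (Finset.range m) (fun k _ => ha _ (by omega)) (summable_shift a ha hs)

lemma fubini_aux (g : ℕ → ℝ) (N : ℕ) :
    ∑ i ∈ Finset.range N, ∑ k ∈ Finset.Ico i N, g k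
      = ∑ k ∈ Finset.range N, ((k + 1 : ℕ) : ℝ) * g k := by
  induction N with
  | zero => simp
  | succ N ih =>
    have step : ∀ i ∈ Finset.range (N + 1),
        ∑ k ∈ Finset.Ico i (N + 1), g k = (∑ k ∈ Finset.Ico i N, g k) + g N := by
      intro i hi
      exact Finset.sum_Ico_succ_top (by have := Finset.mem_range.1 hi; omega) g
    rw [Finset.sum_congr rfl step, Finset.sum_add_distrib, Finset.sum_const, Finset.card_range,
      Finset.sum_range_succ (f := fun i => ∑ k ∈ Finset.Ico i N, g k), Finset.Ico_self,
      Finset.sum_empty, add_zero, ih, Finset.sum_range_succ]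
    push_cast
    ring

lemma summable_tail (a : ℕ → ℝ) (ha : ∀ n, 1 ≤ n → 0 ≤ a n)
    (hs : Summable fun n : ℕ => ((n + 1 : ℕ) : ℝ) * a (n + 1)) :
    Summable (fun n : ℕ => lsum a - psum a (n + 1)) := by
  have hgs : Summable (fun k : ℕ => a (k + 1)) := summable_shift a ha hs
  have hgnn : ∀ k : ℕ, 0 ≤ a (k + 1) := fun k => ha _ (by omega)
  have hhnn : ∀ k : ℕ, 0 ≤ ((k + 1 : ℕ) : ℝ) * a (k + 1) :=
    fun k => mul_nonneg (by positivity) (hgnn k)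
  set M := ∑' k : ℕ, ((k + 1 : ℕ) : ℝ) * a (k + 1) with hM
  apply summable_of_sum_range_le (c := 2 * M)
  · intro n
    have := psum_le_lsum a ha hs (n + 1)
    linarith
  · intro N
    have hR : ∀ i : ℕ, lsum a - psum a (i + 1) = ∑' k : ℕ, a (k + i + 1) := by
      intro i
      have h2 := Summable.sum_add_tsum_nat_add i hgs
      rw [psum_eq_range]
      rw [lsum]
      linarith [h2]
    have hsplit : ∀ i : ℕ, i < N →
        (∑' k : ℕ, a (k + i + 1)) = (∑ k ∈ Finset.Ico i N, a (k + 1)) + ∑' k : ℕ, a (k + N + 1) := by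
      intro i hi
      have hsi : Summable (fun k : ℕ => a (k + i + 1)) := by
        have := (summable_nat_add_iff (f := fun k : ℕ => a (k + 1)) i).2 hgs
        exact this.congr fun k => by ring_nf
      have h3 := Summable.sum_add_tsum_nat_add (N - i) hsi
      have e1 : (∑ k ∈ Finset.range (N - i), a (k + i + 1)) = ∑ k ∈ Finset.Ico i N, a (k + 1) := by
        rw [Finset.sum_Ico_eq_sum_range]
        exact Finset.sum_congr rfl fun k _ => by congr 1; omega
      have e2 : (∑' k : ℕ, a (k + (N - i) + i + 1)) = ∑' k : ℕ, a (k + N + 1) := by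
        apply tsum_congr
        intro k
        congr 1
        omega
      rw [← h3, e1, e2]
    have htot : (∑ i ∈ Finset.range N, (lsum a - psum a (i + 1)))
        = (∑ k ∈ Finset.range N, ((k + 1 : ℕ) : ℝ) * a (k + 1))
          + (N : ℝ) * ∑' k : ℕ, a (k + N + 1) := by
      calc ∑ i ∈ Finset.range N, (lsum a - psum a (i + 1))
          = ∑ i ∈ Finset.range N,
              ((∑ k ∈ Finset.Ico i N, a (k + 1)) + ∑' k : ℕ, a (k + N + 1)) := by
            apply Finset.sum_congr rfl
            intro i hi
            rw [hR i, hsplit i (Finset.mem_range.1 hi)]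
        _ = (∑ i ∈ Finset.range N, ∑ k ∈ Finset.Ico i N, a (k + 1))
              + (N : ℝ) * ∑' k : ℕ, a (k + N + 1) := by
            rw [Finset.sum_add_distrib, Finset.sum_const, Finset.card_range, nsmul_eq_mul]
        _ = _ := by rw [fubini_aux]
    rw [htot]
    have hp1 : (∑ k ∈ Finset.range N, ((k + 1 : ℕ) : ℝ) * a (k + 1)) ≤ M :=
      Summable.sum_le_tsum (Finset.range N) (fun k _ => hhnn k) hs
    have hsN : Summable (fun k : ℕ => a (k + N + 1)) := by
      have := (summable_nat_add_iff (f := fun k : ℕ => a (k + 1)) N).2 hgs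
      exact this.congr fun k => by ring_nf
    have hsNh : Summable (fun k : ℕ => ((k + N + 1 : ℕ) : ℝ) * a (k + N + 1)) := by
      have := (summable_nat_add_iff (f := fun k : ℕ => ((k + 1 : ℕ) : ℝ) * a (k + 1)) N).2 hs
      exact this.congr fun k => rfl
    have hp2 : (N : ℝ) * (∑' k : ℕ, a (k + N + 1)) ≤ M := by
      rw [← tsum_mul_left]
      have step1 : (∑' k : ℕ, (N : ℝ) * a (k + N + 1))
          ≤ ∑' k : ℕ, ((k + N + 1 : ℕ) : ℝ) * a (k + N + 1) := by
        refine Summable.tsum_le_tsum (fun k => ?_) (hsN.mul_left _) hsNh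
        have hcast : (N : ℝ) ≤ ((k + N + 1 : ℕ) : ℝ) := by exact_mod_cast (by omega : N ≤ k + N + 1)
        exact mul_le_mul_of_nonneg_right hcast (ha _ (by omega))
      have step2 : (∑' k : ℕ, ((k + N + 1 : ℕ) : ℝ) * a (k + N + 1)) ≤ M := by
        have h4 := Summable.sum_add_tsum_nat_add N hs
        have h5 : (0:ℝ) ≤ ∑ i ∈ Finset.range N, ((i + 1 : ℕ) : ℝ) * a (i + 1) :=
          Finset.sum_nonneg fun i _ => hhnn i
        rw [hM]
        linarith [h4, h5]
      linarith
    linarith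

lemma Vdw_run (a0 a1 : ℕ → ℝ) {x : Sig} {n : ℕ} (hn : 1 ≤ n)
    (hlt : ∀ k, k < n → x k = x 0) (hne : x n ≠ x 0) :
    Vdw a0 a1 x = if x 0 = 0 then -psum a0 n else -psum a1 n := by
  have h : ∃ m, x m ≠ x 0 := ⟨n, hne⟩
  have hfind : Nat.find h = n := by
    rw [Nat.find_eq_iff]
    exact ⟨hne, fun m hm => not_not.2 (hlt m hm)⟩
  unfold Vdw
  rw [dif_pos h, hfind]

lemma Vdw_const (a0 a1 : ℕ → ℝ) {x : Sig} (hc : ∀ n, x n = x 0) :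
    Vdw a0 a1 x = if x 0 = 0 then -lsum a0 else -lsum a1 := by
  unfold Vdw
  rw [dif_neg]
  push_neg
  exact hc

lemma Vdw_run0 (a0 a1 : ℕ → ℝ) {x : Sig} {n : ℕ} (hn : 1 ≤ n)
    (h0 : ∀ k, k < n → x k = 0) (h1 : x n = 1) :
    Vdw a0 a1 x = -psum a0 n := by
  have hx0 : x 0 = 0 := h0 0 hn
  rw [Vdw_run a0 a1 hn (fun k hk => (h0 k hk).trans hx0.symm)
    (by rw [h1, hx0]; decide), if_pos hx0]

lemma Vdw_run1 (a0 a1 : ℕ → ℝ) {x : Sig} {n : ℕ} (hn : 1 ≤ n)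
    (h0 : ∀ k, k < n → x k = 1) (h1 : x n = 0) :
    Vdw a0 a1 x = -psum a1 n := by
  have hx0 : x 0 = 1 := h0 0 hn
  rw [Vdw_run a0 a1 hn (fun k hk => (h0 k hk).trans hx0.symm)
    (by rw [h1, hx0]; decide), if_neg (by rw [hx0]; decide)]

lemma Vdw_nonpos (a0 a1 : ℕ → ℝ) (ha0 : ∀ n, 1 ≤ n → 0 ≤ a0 n) (ha1 : ∀ n, 1 ≤ n → 0 ≤ a1 n)
    (x : Sig) : Vdw a0 a1 x ≤ 0 := by
  unfold Vdw
  split_ifs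
  · exact neg_nonpos.2 (psum_nonneg a0 ha0 _)
  · exact neg_nonpos.2 (psum_nonneg a1 ha1 _)
  · exact neg_nonpos.2 (lsum_nonneg a0 ha0)
  · exact neg_nonpos.2 (lsum_nonneg a1 ha1)

lemma Vdw_abs_le (a0 a1 : ℕ → ℝ) (ha0 : ∀ n, 1 ≤ n → 0 ≤ a0 n) (ha1 : ∀ n, 1 ≤ n → 0 ≤ a1 n)
    (hs0 : Summable fun n : ℕ => ((n + 1 : ℕ) : ℝ) * a0 (n + 1))
    (hs1 : Summable fun n : ℕ => ((n + 1 : ℕ) : ℝ) * a1 (n + 1))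
    (x : Sig) : |Vdw a0 a1 x| ≤ lsum a0 + lsum a1 := by
  have l0 := lsum_nonneg a0 ha0
  have l1 := lsum_nonneg a1 ha1
  by_cases h : ∃ n, x n ≠ x 0
  · unfold Vdw
    rw [dif_pos h]
    split_ifs
    · rw [abs_neg, abs_of_nonneg (psum_nonneg a0 ha0 _)]
      linarith [psum_le_lsum a0 ha0 hs0 (Nat.find h)]
    · rw [abs_neg, abs_of_nonneg (psum_nonneg a1 ha1 _)]
      linarith [psum_le_lsum a1 ha1 hs1 (Nat.find h)]
  · unfold Vdw
    rw [dif_neg h]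
    split_ifs
    · rw [abs_neg, abs_of_nonneg l0]; linarith
    · rw [abs_neg, abs_of_nonneg l1]; linarith

lemma Vdw_est0 (a0 a1 : ℕ → ℝ) (ha0 : ∀ n, 1 ≤ n → 0 ≤ a0 n)
    (hs0 : Summable fun n : ℕ => ((n + 1 : ℕ) : ℝ) * a0 (n + 1))
    {y : Sig} {m : ℕ} (hm : 1 ≤ m) (hy : ∀ k, k < m → y k = 0) :
    |Vdw a0 a1 y + lsum a0| ≤ lsum a0 - psum a0 m := by
  have hy0 : y 0 = 0 := hy 0 hm
  by_cases h : ∃ n, y n ≠ y 0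
  · have hmn : m ≤ Nat.find h :=
      (Nat.le_find_iff h m).2 fun k hk => not_not.2 ((hy k hk).trans hy0.symm)
    have h1 := psum_le_lsum a0 ha0 hs0 (Nat.find h)
    have h2 := psum_mono a0 ha0 hmn
    unfold Vdw
    rw [dif_pos h, if_pos hy0, abs_of_nonneg (by linarith)]
    linarith
  · push_neg at h
    rw [Vdw_const a0 a1 h, if_pos hy0, neg_add_cancel, abs_zero]
    linarith [psum_le_lsum a0 ha0 hs0 m]

lemma Vdw_est1 (a0 a1 : ℕ → ℝ) (ha1 : ∀ n, 1 ≤ n → 0 ≤ a1 n)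
    (hs1 : Summable fun n : ℕ => ((n + 1 : ℕ) : ℝ) * a1 (n + 1))
    {y : Sig} {m : ℕ} (hm : 1 ≤ m) (hy : ∀ k, k < m → y k = 1) :
    |Vdw a0 a1 y + lsum a1| ≤ lsum a1 - psum a1 m := by
  have hy0 : y 0 = 1 := hy 0 hm
  have hy0' : ¬ (y 0 = 0) := by rw [hy0]; decide
  by_cases h : ∃ n, y n ≠ y 0
  · have hmn : m ≤ Nat.find h :=
      (Nat.le_find_iff h m).2 fun k hk => not_not.2 ((hy k hk).trans hy0.symm)
    have h1 := psum_le_lsum a1 ha1 hs1 (Nat.find h)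
    have h2 := psum_mono a1 ha1 hmn
    unfold Vdw
    rw [dif_pos h, if_neg hy0', abs_of_nonneg (by linarith)]
    linarith
  · push_neg at h
    rw [Vdw_const a0 a1 h, if_neg hy0', neg_add_cancel, abs_zero]
    linarith [psum_le_lsum a1 ha1 hs1 m]

lemma Vdw_close (a0 a1 : ℕ → ℝ) (ha0 : ∀ n, 1 ≤ n → 0 ≤ a0 n) (ha1 : ∀ n, 1 ≤ n → 0 ≤ a1 n)
    (hs0 : Summable fun n : ℕ => ((n + 1 : ℕ) : ℝ) * a0 (n + 1))
    (hs1 : Summable fun n : ℕ => ((n + 1 : ℕ) : ℝ) * a1 (n + 1))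
    {x y : Sig} {m : ℕ} (hm : 1 ≤ m) (hxy : nClose m x y) :
    |Vdw a0 a1 x - Vdw a0 a1 y|
      ≤ 2 * (lsum a0 - psum a0 m) + 2 * (lsum a1 - psum a1 m) := by
  have hy0 : y 0 = x 0 := (hxy 0 hm).symm
  have t0 := psum_le_lsum a0 ha0 hs0 m
  have t1 := psum_le_lsum a1 ha1 hs1 m
  by_cases hall : ∀ k, k < m → x k = x 0
  · rcases fin2cases (x 0) with h0 | h0
    · have e1 := Vdw_est0 a0 a1 ha0 hs0 hm (fun k hk => (hall k hk).trans h0)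
      have e2 := Vdw_est0 a0 a1 ha0 hs0 hm
        (fun k hk => ((hxy k hk).symm.trans (hall k hk)).trans h0)
      have tri := abs_sub_le (Vdw a0 a1 x) (-(lsum a0)) (Vdw a0 a1 y)
      rw [sub_neg_eq_add, abs_sub_comm (-(lsum a0)), sub_neg_eq_add] at tri
      linarith
    · have e1 := Vdw_est1 a0 a1 ha1 hs1 hm (fun k hk => (hall k hk).trans h0)
      have e2 := Vdw_est1 a0 a1 ha1 hs1 hm
        (fun k hk => ((hxy k hk).symm.trans (hall k hk)).trans h0)
      have tri := abs_sub_le (Vdw a0 a1 x) (-(lsum a1)) (Vdw a0 a1 y)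
      rw [sub_neg_eq_add, abs_sub_comm (-(lsum a1)), sub_neg_eq_add] at tri
      linarith
  · push_neg at hall
    obtain ⟨j, hj, hnej⟩ := hall
    have h : ∃ n, x n ≠ x 0 := ⟨j, hnej⟩
    have hfl : Nat.find h < m := lt_of_le_of_lt (Nat.find_min' h hnej) hj
    have hne' : x (Nat.find h) ≠ x 0 := Nat.find_spec h
    have hmin : ∀ k, k < Nat.find h → x k = x 0 := fun k hk => not_not.1 (Nat.find_min h hk)
    have hn1 : 1 ≤ Nat.find h := by
      rcases Nat.eq_zero_or_pos (Nat.find h) with h' | h'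
      · rw [h'] at hne'
        exact absurd rfl hne'
      · exact h'
    have hx := Vdw_run a0 a1 hn1 hmin hne'
    have hyv : Vdw a0 a1 y = if y 0 = 0 then -psum a0 (Nat.find h) else -psum a1 (Nat.find h) := by
      apply Vdw_run a0 a1 hn1
      · intro k hk
        rw [← hxy k (lt_trans hk hfl), hy0]
        exact hmin k hk
      · rw [← hxy _ hfl, hy0]
        exact hne'
    rw [hx, hyv, hy0, sub_self, abs_zero]
    linarith

lemma nClose_mem_nhds (x : Sig) (m : ℕ) : {y : Sig | nClose m x y} ∈ nhds x := by
  have heq : {y : Sig | nClose m x y} = ⋂ k ∈ Finset.range m, (fun y : Sig => y k) ⁻¹' {x k} := by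
    ext y
    simp only [Set.mem_setOf_eq, Set.mem_iInter, Set.mem_preimage, Set.mem_singleton_iff,
      Finset.mem_range, nClose]
    constructor
    · intro hcl k hk
      exact (hcl k hk).symm
    · intro hcl k hk
      exact (hcl k hk).symm
  rw [heq]
  apply IsOpen.mem_nhds
  · exact isOpen_biInter_finset fun k _ =>
      (continuous_apply k).isOpen_preimage _ (isOpen_discrete _)
  · simp

lemma Vdw_continuous (a0 a1 : ℕ → ℝ) (ha0 : ∀ n, 1 ≤ n → 0 ≤ a0 n) (ha1 : ∀ n, 1 ≤ n → 0 ≤ a1 n)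
    (hs0 : Summable fun n : ℕ => ((n + 1 : ℕ) : ℝ) * a0 (n + 1))
    (hs1 : Summable fun n : ℕ => ((n + 1 : ℕ) : ℝ) * a1 (n + 1)) :
    Continuous (Vdw a0 a1) := by
  rw [continuous_iff_continuousAt]
  intro x
  by_cases h : ∃ n, x n ≠ x 0
  · have hne' : x (Nat.find h) ≠ x 0 := Nat.find_spec h
    have hmin : ∀ k, k < Nat.find h → x k = x 0 := fun k hk => not_not.1 (Nat.find_min h hk)
    have hn1 : 1 ≤ Nat.find h := by
      rcases Nat.eq_zero_or_pos (Nat.find h) with h' | h'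
      · rw [h'] at hne'
        exact absurd rfl hne'
      · exact h'
    have key : ∀ y, nClose (Nat.find h + 1) x y → Vdw a0 a1 y = Vdw a0 a1 x := by
      intro y hy
      have hy0 : y 0 = x 0 := (hy 0 (by omega)).symm
      have hxv := Vdw_run a0 a1 hn1 hmin hne'
      have hyv : Vdw a0 a1 y
          = if y 0 = 0 then -psum a0 (Nat.find h) else -psum a1 (Nat.find h) := by
        apply Vdw_run a0 a1 hn1
        · intro k hk
          rw [← hy k (by omega), hy0]
          exact hmin k hk
        · rw [← hy _ (by omega), hy0]
          exact hne'
      rw [hxv, hyv, hy0]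
    exact ContinuousAt.congr continuousAt_const
      (Filter.eventually_of_mem (nClose_mem_nhds x (Nat.find h + 1))
        (fun y hy => (key y hy).symm))
  · push_neg at h
    have hxv := Vdw_const a0 a1 h
    have hcont0 : ∀ (a : ℕ → ℝ), (∀ n, 1 ≤ n → 0 ≤ a n) →
        (Summable fun n : ℕ => ((n + 1 : ℕ) : ℝ) * a (n + 1)) →
        ∀ ε : ℝ, 0 < ε → ∃ M : ℕ, lsum a - psum a (M + 1) < ε := by
      intro a ha hs ε hε
      have hps : Filter.Tendsto (fun m : ℕ => psum a (m + 1)) Filter.atTop (nhds (lsum a)) := by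
        have h1 := (summable_shift a ha hs).hasSum.tendsto_sum_nat
        apply h1.congr
        intro n
        rw [psum_eq_range]
      have h2 : Filter.Tendsto (fun m : ℕ => lsum a - psum a (m + 1)) Filter.atTop (nhds 0) := by
        simpa using hps.const_sub (lsum a)
      exact (h2.eventually (gt_mem_nhds hε)).exists
    rcases fin2cases (x 0) with h0 | h0
    · rw [ContinuousAt, Metric.tendsto_nhds]
      intro ε hε
      obtain ⟨M, hM⟩ := hcont0 a0 ha0 hs0 ε hε
      filter_upwards [nClose_mem_nhds x (M + 1)] with y hy
      have e := Vdw_est0 a0 a1 ha0 hs0 (m := M + 1) (by omega)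
        (fun k hk => (hy k hk).symm.trans ((h k).trans h0))
      rw [Real.dist_eq, hxv, if_pos h0, sub_neg_eq_add]
      linarith
    · rw [ContinuousAt, Metric.tendsto_nhds]
      intro ε hε
      obtain ⟨M, hM⟩ := hcont0 a1 ha1 hs1 ε hε
      filter_upwards [nClose_mem_nhds x (M + 1)] with y hy
      have e := Vdw_est1 a0 a1 ha1 hs1 (m := M + 1) (by omega)
        (fun k hk => (hy k hk).symm.trans ((h k).trans h0))
      rw [Real.dist_eq, hxv, if_neg (by rw [h0]; decide), sub_neg_eq_add]
      linarith

lemma mem_cyl_cons {i : Fin 2} {w : List (Fin 2)} {x : Sig} :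
    x ∈ cyl (i :: w) ↔ x 0 = i ∧ shft x ∈ cyl w := by
  constructor
  · intro hx
    refine ⟨hx 0 (by simp), fun k hk => ?_⟩
    have h1 := hx (k + 1) (by simpa using Nat.succ_lt_succ hk)
    simpa [shft] using h1
  · rintro ⟨h0, hw⟩ k hk
    match k with
    | 0 => simpa using h0
    | (k + 1) =>
      have h1 := hw k (by simpa using Nat.lt_of_succ_lt_succ hk)
      simpa [shft] using h1

lemma mem_cyl_single {l : Fin 2} {x : Sig} : x ∈ cyl [l] ↔ x 0 = l := by
  constructor
  · intro hx
    simpa using hx 0 (by simp)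
  · intro h0 k hk
    match k with
    | 0 => simpa using h0

lemma mem_cyl_rep {j l : Fin 2} : ∀ (n : ℕ) (x : Sig),
    x ∈ cyl (List.replicate n j ++ [l]) ↔ (∀ k, k < n → x k = j) ∧ x n = l := by
  intro n
  induction n with
  | zero =>
    intro x
    simp only [List.replicate_zero, List.nil_append, mem_cyl_single]
    exact ⟨fun h => ⟨fun k hk => absurd hk (by omega), h⟩, fun h => h.2⟩
  | succ n ih =>
    intro x
    rw [List.replicate_succ, List.cons_append, mem_cyl_cons, ih (shft x)]
    constructor
    · rintro ⟨h0, hr, hn⟩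
      refine ⟨fun k hk => ?_, hn⟩
      match k with
      | 0 => exact h0
      | (k + 1) => exact hr k (by omega)
    · rintro ⟨hr, hn⟩
      exact ⟨hr 0 (by omega), fun k hk => hr (k + 1) (by omega), hn⟩

lemma mem_cyl_pair {i j : Fin 2} {x : Sig} : x ∈ cyl [i, j] ↔ x 0 = i ∧ x 1 = j := by
  rw [show ([i, j] : List (Fin 2)) = i :: [j] from rfl, mem_cyl_cons, mem_cyl_single]
  exact Iff.rfl

end Stmt8Aux


/-- every double-well type potential is cohomologous, via a bounded Borel
coboundary `V∘σ − V` with `V` constant on the cylinders `[0^n 1]` and `[1^n 0]`, to a reduced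
double-well type potential `H̃` with `H̃ = 0` on `[00] ∪ [11]`,
`H̃ = b_n^0 + Σ_{k=1}^{n−1} a_k^1` on `[0 1^n 0]` and `H̃ = b_n^1 + Σ_{k=1}^{n−1} a_k^0`
on `[1 0^n 1]`. -/
theorem stmt_8 (H : Sig → ℝ) (a0 a1 b0 b1 : ℕ → ℝ) (hDW : DW H a0 a1 b0 b1) :
    ∃ V : Sig → ℝ, Measurable V ∧ (∃ C : ℝ, ∀ x, |V x| ≤ C) ∧
      (∀ n : ℕ, 1 ≤ n → ∀ x ∈ cyl (List.replicate n 0 ++ [1]),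
        ∀ y ∈ cyl (List.replicate n 0 ++ [1]), V x = V y) ∧
      (∀ n : ℕ, 1 ≤ n → ∀ x ∈ cyl (List.replicate n 1 ++ [0]),
        ∀ y ∈ cyl (List.replicate n 1 ++ [0]), V x = V y) ∧
      (∀ x, 0 ≤ H x - (V (shft x) - V x)) ∧
      SummableVar (fun x => H x - (V (shft x) - V x)) ∧
      (∀ x ∈ cyl [0, 0] ∪ cyl [1, 1], H x - (V (shft x) - V x) = 0) ∧
      (∀ n : ℕ, 1 ≤ n → ∀ x ∈ cyl (0 :: (List.replicate n 1 ++ [0])),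
        H x - (V (shft x) - V x) = b0 n + ∑ k ∈ Finset.Ico 1 n, a1 k) ∧
      (∀ n : ℕ, 1 ≤ n → ∀ x ∈ cyl (1 :: (List.replicate n 0 ++ [1])),
        H x - (V (shft x) - V x) = b1 n + ∑ k ∈ Finset.Ico 1 n, a0 k) ∧
      ReducedDW (fun x => H x - (V (shft x) - V x))
        (fun n => b0 n + ∑ k ∈ Finset.Ico 1 n, a1 k)
        (fun n => b1 n + ∑ k ∈ Finset.Ico 1 n, a0 k) := by
  classical
  have ha0 := hDW.anneg0
  have ha1 := hDW.anneg1
  have hs0 := hDW.suma0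
  have hs1 := hDW.suma1
  have hVcont : Continuous (Vdw a0 a1) := Vdw_continuous a0 a1 ha0 ha1 hs0 hs1
  have hVnp : ∀ z, Vdw a0 a1 z ≤ 0 := Vdw_nonpos a0 a1 ha0 ha1
  have hshft : Continuous shft := continuous_pi fun n => continuous_apply (n + 1)
  -- `H` vanishes at the two fixed points
  have hHz : H zpt = 0 := by
    have hp : ∀ m : ℕ, H (fun k => if k = m + 2 then 1 else 0) = a0 (m + 1) := by
      intro m
      apply hDW.vala0 (m + 1) (by omega)
      rw [mem_cyl_cons]
      constructor
      · show (if (0 : ℕ) = m + 2 then (1 : Fin 2) else 0) = 0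
        rw [if_neg (by omega)]
      · rw [mem_cyl_rep]
        constructor
        · intro k hk
          show (if k + 1 = m + 2 then (1 : Fin 2) else 0) = 0
          rw [if_neg (by omega)]
        · show (if (m + 1) + 1 = m + 2 then (1 : Fin 2) else 0) = 1
          rw [if_pos (by omega)]
    have ht : Filter.Tendsto (fun m : ℕ => (fun k => if k = m + 2 then (1 : Fin 2) else 0 : Sig))
        Filter.atTop (nhds zpt) := by
      rw [tendsto_pi_nhds]
      intro k
      have hconst : Filter.Tendsto (fun _ : ℕ => (0 : Fin 2)) Filter.atTop (nhds (0 : Fin 2)) :=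
        tendsto_const_nhds
      refine Filter.Tendsto.congr' ?_ hconst
      filter_upwards [Filter.eventually_ge_atTop k] with m hm
      show (0 : Fin 2) = if k = m + 2 then 1 else 0
      rw [if_neg (by omega)]
    have hHt := (hDW.cont.tendsto zpt).comp ht
    have hHt2 : Filter.Tendsto (fun m : ℕ => a0 (m + 1)) Filter.atTop (nhds (H zpt)) :=
      Filter.Tendsto.congr (fun m => hp m) hHt
    have hlim : Filter.Tendsto (fun m : ℕ => a0 (m + 1)) Filter.atTop (nhds 0) := by
      apply squeeze_zero (fun m => ha0 _ (by omega)) (fun m => ?_) hs0.tendsto_atTop_zero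
      have h1 : (1 : ℝ) ≤ ((m + 1 : ℕ) : ℝ) := by exact_mod_cast Nat.succ_le_succ (Nat.zero_le m)
      nlinarith [ha0 (m + 1) (by omega : 1 ≤ m + 1)]
    exact tendsto_nhds_unique hHt2 hlim
  have hHo : H opt = 0 := by
    have hp : ∀ m : ℕ, H (fun k => if k = m + 2 then 0 else 1) = a1 (m + 1) := by
      intro m
      apply hDW.vala1 (m + 1) (by omega)
      rw [mem_cyl_cons]
      constructor
      · show (if (0 : ℕ) = m + 2 then (0 : Fin 2) else 1) = 1
        rw [if_neg (by omega)]
      · rw [mem_cyl_rep]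
        constructor
        · intro k hk
          show (if k + 1 = m + 2 then (0 : Fin 2) else 1) = 1
          rw [if_neg (by omega)]
        · show (if (m + 1) + 1 = m + 2 then (0 : Fin 2) else 1) = 0
          rw [if_pos (by omega)]
    have ht : Filter.Tendsto (fun m : ℕ => (fun k => if k = m + 2 then (0 : Fin 2) else 1 : Sig))
        Filter.atTop (nhds opt) := by
      rw [tendsto_pi_nhds]
      intro k
      have hconst : Filter.Tendsto (fun _ : ℕ => (1 : Fin 2)) Filter.atTop (nhds (1 : Fin 2)) :=
        tendsto_const_nhds
      refine Filter.Tendsto.congr' ?_ hconst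
      filter_upwards [Filter.eventually_ge_atTop k] with m hm
      show (1 : Fin 2) = if k = m + 2 then 0 else 1
      rw [if_neg (by omega)]
    have hHt := (hDW.cont.tendsto opt).comp ht
    have hHt2 : Filter.Tendsto (fun m : ℕ => a1 (m + 1)) Filter.atTop (nhds (H opt)) :=
      Filter.Tendsto.congr (fun m => hp m) hHt
    have hlim : Filter.Tendsto (fun m : ℕ => a1 (m + 1)) Filter.atTop (nhds 0) := by
      apply squeeze_zero (fun m => ha1 _ (by omega)) (fun m => ?_) hs1.tendsto_atTop_zero
      have h1 : (1 : ℝ) ≤ ((m + 1 : ℕ) : ℝ) := by exact_mod_cast Nat.succ_le_succ (Nat.zero_le m)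
      nlinarith [ha1 (m + 1) (by omega : 1 ≤ m + 1)]
    exact tendsto_nhds_unique hHt2 hlim
  -- the core computation : the new potential vanishes whenever `x 1 = x 0`
  have hcore : ∀ x : Sig, x 1 = x 0 → H x - (Vdw a0 a1 (shft x) - Vdw a0 a1 x) = 0 := by
    intro x h1
    by_cases h : ∃ n, x n ≠ x 0
    · have hne' : x (Nat.find h) ≠ x 0 := Nat.find_spec h
      have hmin : ∀ k, k < Nat.find h → x k = x 0 := fun k hk => not_not.1 (Nat.find_min h hk)
      set n := Nat.find h with hns
      have hn2 : 2 ≤ n := by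
        rcases (by omega : n = 0 ∨ n = 1 ∨ 2 ≤ n) with h' | h' | h'
        · rw [h'] at hne'; exact absurd rfl hne'
        · rw [h'] at hne'; exact absurd h1 hne'
        · exact h'
      have hsub : n - 1 + 1 = n := by omega
      rcases fin2cases (x 0) with h0 | h0
      · have hxn : x n = 1 := by
          rcases fin2cases (x n) with hh | hh
          · exact absurd (hh.trans h0.symm) hne'
          · exact hh
        have hVx : Vdw a0 a1 x = -psum a0 n :=
          Vdw_run0 a0 a1 (by omega) (fun k hk => (hmin k hk).trans h0) hxn
        have hVs : Vdw a0 a1 (shft x) = -psum a0 (n - 1) := by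
          apply Vdw_run0 a0 a1 (by omega)
          · intro k hk
            exact (hmin (k + 1) (by omega)).trans h0
          · show x (n - 1 + 1) = 1
            rw [hsub]
            exact hxn
        have hHx : H x = a0 (n - 1) := by
          apply hDW.vala0 (n - 1) (by omega)
          rw [mem_cyl_cons]
          refine ⟨h0, ?_⟩
          rw [mem_cyl_rep]
          refine ⟨fun k hk => (hmin (k + 1) (by omega)).trans h0, ?_⟩
          show x (n - 1 + 1) = 1
          rw [hsub]
          exact hxn
        have hps : psum a0 n = psum a0 (n - 1) + a0 (n - 1) := by
          conv_lhs => rw [← hsub]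
          exact psum_succ a0 (by omega)
        rw [hVx, hVs, hHx, hps]
        ring
      · have hxn : x n = 0 := by
          rcases fin2cases (x n) with hh | hh
          · exact hh
          · exact absurd (hh.trans h0.symm) hne'
        have hVx : Vdw a0 a1 x = -psum a1 n :=
          Vdw_run1 a0 a1 (by omega) (fun k hk => (hmin k hk).trans h0) hxn
        have hVs : Vdw a0 a1 (shft x) = -psum a1 (n - 1) := by
          apply Vdw_run1 a0 a1 (by omega)
          · intro k hk
            exact (hmin (k + 1) (by omega)).trans h0
          · show x (n - 1 + 1) = 0
            rw [hsub]
            exact hxn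
        have hHx : H x = a1 (n - 1) := by
          apply hDW.vala1 (n - 1) (by omega)
          rw [mem_cyl_cons]
          refine ⟨h0, ?_⟩
          rw [mem_cyl_rep]
          refine ⟨fun k hk => (hmin (k + 1) (by omega)).trans h0, ?_⟩
          show x (n - 1 + 1) = 0
          rw [hsub]
          exact hxn
        have hps : psum a1 n = psum a1 (n - 1) + a1 (n - 1) := by
          conv_lhs => rw [← hsub]
          exact psum_succ a1 (by omega)
        rw [hVx, hVs, hHx, hps]
        ring
    · push_neg at h
      have hsx : shft x = x := funext fun k => (h (k + 1)).trans (h k).symm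
      rw [hsx, sub_self, sub_zero]
      rcases fin2cases (x 0) with h0 | h0
      · rw [show x = zpt from funext fun k => (h k).trans h0]
        exact hHz
      · rw [show x = opt from funext fun k => (h k).trans h0]
        exact hHo
  -- values on the two families of cylinders
  have hval0 : ∀ n : ℕ, 1 ≤ n → ∀ x ∈ cyl (0 :: (List.replicate n 1 ++ [0])),
      H x - (Vdw a0 a1 (shft x) - Vdw a0 a1 x) = b0 n + ∑ k ∈ Finset.Ico 1 n, a1 k := by
    intro n hn x hx
    obtain ⟨hx0, hmem⟩ := mem_cyl_cons.1 hx
    obtain ⟨hr, hl⟩ := (mem_cyl_rep n (shft x)).1 hmem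
    have hVx : Vdw a0 a1 x = -psum a0 1 := by
      apply Vdw_run0 a0 a1 le_rfl
      · intro k hk
        rw [show k = 0 by omega]
        exact hx0
      · exact hr 0 hn
    have hVs : Vdw a0 a1 (shft x) = -psum a1 n := Vdw_run1 a0 a1 hn hr hl
    have hHx : H x = b0 n := hDW.valb0 n hn x hx
    rw [hVx, hVs, hHx, psum_one]
    show _ = b0 n + psum a1 n
    ring
  have hval1 : ∀ n : ℕ, 1 ≤ n → ∀ x ∈ cyl (1 :: (List.replicate n 0 ++ [1])),
      H x - (Vdw a0 a1 (shft x) - Vdw a0 a1 x) = b1 n + ∑ k ∈ Finset.Ico 1 n, a0 k := by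
    intro n hn x hx
    obtain ⟨hx0, hmem⟩ := mem_cyl_cons.1 hx
    obtain ⟨hr, hl⟩ := (mem_cyl_rep n (shft x)).1 hmem
    have hVx : Vdw a0 a1 x = -psum a1 1 := by
      apply Vdw_run1 a0 a1 le_rfl
      · intro k hk
        rw [show k = 0 by omega]
        exact hx0
      · exact hr 0 hn
    have hVs : Vdw a0 a1 (shft x) = -psum a0 n := Vdw_run0 a0 a1 hn hr hl
    have hHx : H x = b1 n := hDW.valb1 n hn x hx
    rw [hVx, hVs, hHx, psum_one]
    show _ = b1 n + psum a0 n
    ring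
  -- nonnegativity
  have hnn : ∀ x, 0 ≤ H x - (Vdw a0 a1 (shft x) - Vdw a0 a1 x) := by
    intro x
    by_cases h1 : x 1 = x 0
    · exact le_of_eq (hcore x h1).symm
    · have hVx : Vdw a0 a1 x = 0 := by
        rcases fin2cases (x 0) with h0 | h0
        · have hx1 : x 1 = 1 := by
            rcases fin2cases (x 1) with hh | hh
            · exact absurd (hh.trans h0.symm) h1
            · exact hh
          rw [Vdw_run0 a0 a1 le_rfl (fun k hk => by rw [show k = 0 by omega]; exact h0) hx1,
            psum_one, neg_zero]
        · have hx1 : x 1 = 0 := by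
            rcases fin2cases (x 1) with hh | hh
            · exact hh
            · exact absurd (hh.trans h0.symm) h1
          rw [Vdw_run1 a0 a1 le_rfl (fun k hk => by rw [show k = 0 by omega]; exact h0) hx1,
            psum_one, neg_zero]
      have h2 := hVnp (shft x)
      have h3 := hDW.nonneg x
      rw [hVx]
      linarith
  -- zero on [00] ∪ [11]
  have hzero : ∀ x ∈ cyl [0, 0] ∪ cyl [1, 1],
      H x - (Vdw a0 a1 (shft x) - Vdw a0 a1 x) = 0 := by
    rintro x (hx | hx)
    · obtain ⟨h0, h1⟩ := mem_cyl_pair.1 hx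
      exact hcore x (h1.trans h0.symm)
    · obtain ⟨h0, h1⟩ := mem_cyl_pair.1 hx
      exact hcore x (h1.trans h0.symm)
  -- summable variation
  obtain ⟨z0, -, hz0⟩ := IsCompact.exists_isMaxOn (isCompact_univ (X := Sig))
    ⟨zpt, Set.mem_univ zpt⟩ (hDW.cont.abs.continuousOn)
  have hCH : ∀ z : Sig, |H z| ≤ |H z0| := fun z => isMaxOn_iff.1 hz0 z (Set.mem_univ z)
  set CH := |H z0| with hCHdef
  have hsvar : SummableVar (fun x => H x - (Vdw a0 a1 (shft x) - Vdw a0 a1 x)) := by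
    set W : Sig → ℝ := fun x => H x - (Vdw a0 a1 (shft x) - Vdw a0 a1 x) with hW
    set B : ℕ → ℝ := fun n => Var H (n + 1)
      + (if n = 0 then 2 * (lsum a0 + lsum a1)
         else 2 * (lsum a0 - psum a0 n) + 2 * (lsum a1 - psum a1 n))
      + (2 * (lsum a0 - psum a0 (n + 1)) + 2 * (lsum a1 - psum a1 (n + 1))) with hB
    have hbddH : ∀ n : ℕ, BddAbove {d : ℝ | ∃ x y : Sig, nClose n x y ∧ d = |H x - H y|} := by
      intro n
      refine ⟨2 * CH, ?_⟩
      rintro d ⟨x, y, -, rfl⟩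
      have e1 := hCH x
      have e2 := hCH y
      calc |H x - H y| ≤ |H x| + |H y| := abs_sub _ _
        _ ≤ 2 * CH := by linarith
    have hVarHnn : ∀ n : ℕ, 0 ≤ Var H n := by
      intro n
      apply le_csSup (hbddH n)
      exact ⟨zpt, zpt, fun k _ => rfl, by simp⟩
    have hub : ∀ n : ℕ, ∀ d ∈ {d : ℝ | ∃ x y : Sig, nClose (n + 1) x y ∧ d = |W x - W y|},
        d ≤ B n := by
      rintro n d ⟨x, y, hxy, rfl⟩
      have e1 : |H x - H y| ≤ Var H (n + 1) := le_csSup (hbddH (n + 1)) ⟨x, y, hxy, rfl⟩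
      have e3 : |Vdw a0 a1 x - Vdw a0 a1 y|
          ≤ 2 * (lsum a0 - psum a0 (n + 1)) + 2 * (lsum a1 - psum a1 (n + 1)) :=
        Vdw_close a0 a1 ha0 ha1 hs0 hs1 (by omega) hxy
      have e2 : |Vdw a0 a1 (shft x) - Vdw a0 a1 (shft y)|
          ≤ (if n = 0 then 2 * (lsum a0 + lsum a1)
             else 2 * (lsum a0 - psum a0 n) + 2 * (lsum a1 - psum a1 n)) := by
        rcases Nat.eq_zero_or_pos n with hn | hn
        · subst hn
          rw [if_pos rfl]
          have b1 := Vdw_abs_le a0 a1 ha0 ha1 hs0 hs1 (shft x)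
          have b2 := Vdw_abs_le a0 a1 ha0 ha1 hs0 hs1 (shft y)
          calc |Vdw a0 a1 (shft x) - Vdw a0 a1 (shft y)|
              ≤ |Vdw a0 a1 (shft x)| + |Vdw a0 a1 (shft y)| := abs_sub _ _
            _ ≤ 2 * (lsum a0 + lsum a1) := by linarith
        · rw [if_neg (by omega)]
          exact Vdw_close a0 a1 ha0 ha1 hs0 hs1 hn (fun k hk => hxy (k + 1) (by omega))
      have hsplit : W x - W y = (H x - H y)
          - (Vdw a0 a1 (shft x) - Vdw a0 a1 (shft y)) + (Vdw a0 a1 x - Vdw a0 a1 y) := by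
        simp only [hW]
        ring
      have tri1 := abs_add_le ((H x - H y) - (Vdw a0 a1 (shft x) - Vdw a0 a1 (shft y)))
        (Vdw a0 a1 x - Vdw a0 a1 y)
      have tri2 := abs_sub (H x - H y) (Vdw a0 a1 (shft x) - Vdw a0 a1 (shft y))
      rw [hsplit, hB]
      dsimp only
      linarith
    have hBnn : ∀ n, 0 ≤ B n := by
      intro n
      have l0 := lsum_nonneg a0 ha0
      have l1 := lsum_nonneg a1 ha1
      have p1 := psum_le_lsum a0 ha0 hs0 n
      have p2 := psum_le_lsum a1 ha1 hs1 n
      have p3 := psum_le_lsum a0 ha0 hs0 (n + 1)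
      have p4 := psum_le_lsum a1 ha1 hs1 (n + 1)
      have hv := hVarHnn (n + 1)
      rw [hB]
      dsimp only
      split_ifs
      · linarith
      · linarith
    have hle : ∀ n : ℕ, Var W (n + 1) ≤ B n := fun n => Real.sSup_le (hub n) (hBnn n)
    have hWnn : ∀ n : ℕ, 0 ≤ Var W (n + 1) := by
      intro n
      apply le_csSup ⟨B n, hub n⟩
      exact ⟨zpt, zpt, fun k _ => rfl, by simp⟩
    apply Summable.of_nonneg_of_le hWnn hle
    have S3 : Summable (fun n : ℕ =>
        2 * (lsum a0 - psum a0 (n + 1)) + 2 * (lsum a1 - psum a1 (n + 1))) :=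
      ((summable_tail a0 ha0 hs0).mul_left 2).add ((summable_tail a1 ha1 hs1).mul_left 2)
    have S2 : Summable (fun n : ℕ => (if n = 0 then 2 * (lsum a0 + lsum a1)
        else 2 * (lsum a0 - psum a0 n) + 2 * (lsum a1 - psum a1 n))) := by
      apply (summable_nat_add_iff 1).1
      exact S3.congr fun n => (if_neg (by omega)).symm
    rw [hB]
    exact (hDW.svar.add S2).add S3
  -- constancy on the cylinders [0^n 1] and [1^n 0]
  have hc0 : ∀ n : ℕ, 1 ≤ n → ∀ x ∈ cyl (List.replicate n 0 ++ [1]),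
      Vdw a0 a1 x = -psum a0 n := by
    intro n hn x hx
    obtain ⟨hr, hl⟩ := (mem_cyl_rep n x).1 hx
    exact Vdw_run0 a0 a1 hn hr hl
  have hc1 : ∀ n : ℕ, 1 ≤ n → ∀ x ∈ cyl (List.replicate n 1 ++ [0]),
      Vdw a0 a1 x = -psum a1 n := by
    intro n hn x hx
    obtain ⟨hr, hl⟩ := (mem_cyl_rep n x).1 hx
    exact Vdw_run1 a0 a1 hn hr hl
  -- the remaining ReducedDW estimates
  have key0 : ∀ k n : ℕ,
      |(b0 (k + 1) + psum a1 (k + 1)) - (b0 (k + 1 + n) + psum a1 (k + 1 + n))|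
        ≤ (⨆ m : ℕ, |b0 (k + 1) - b0 (k + 1 + m)|) + (lsum a1 - psum a1 (k + 1)) := by
    intro k n
    have h1 : |b0 (k + 1) - b0 (k + 1 + n)| ≤ ⨆ m : ℕ, |b0 (k + 1) - b0 (k + 1 + m)| :=
      le_ciSup (hDW.bddb0 k) n
    have h2 := psum_le_lsum a1 ha1 hs1 (k + 1 + n)
    have h3 : psum a1 (k + 1) ≤ psum a1 (k + 1 + n) := psum_mono a1 ha1 (by omega)
    have h4 : |(b0 (k + 1) + psum a1 (k + 1)) - (b0 (k + 1 + n) + psum a1 (k + 1 + n))|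
        ≤ |b0 (k + 1) - b0 (k + 1 + n)| + |psum a1 (k + 1 + n) - psum a1 (k + 1)| := by
      have h5 : (b0 (k + 1) + psum a1 (k + 1)) - (b0 (k + 1 + n) + psum a1 (k + 1 + n))
          = (b0 (k + 1) - b0 (k + 1 + n)) - (psum a1 (k + 1 + n) - psum a1 (k + 1)) := by ring
      rw [h5]
      exact abs_sub _ _
    rw [abs_of_nonneg (sub_nonneg.2 h3)] at h4
    linarith
  have key1 : ∀ k n : ℕ,
      |(b1 (k + 1) + psum a0 (k + 1)) - (b1 (k + 1 + n) + psum a0 (k + 1 + n))|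
        ≤ (⨆ m : ℕ, |b1 (k + 1) - b1 (k + 1 + m)|) + (lsum a0 - psum a0 (k + 1)) := by
    intro k n
    have h1 : |b1 (k + 1) - b1 (k + 1 + n)| ≤ ⨆ m : ℕ, |b1 (k + 1) - b1 (k + 1 + m)| :=
      le_ciSup (hDW.bddb1 k) n
    have h2 := psum_le_lsum a0 ha0 hs0 (k + 1 + n)
    have h3 : psum a0 (k + 1) ≤ psum a0 (k + 1 + n) := psum_mono a0 ha0 (by omega)
    have h4 : |(b1 (k + 1) + psum a0 (k + 1)) - (b1 (k + 1 + n) + psum a0 (k + 1 + n))|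
        ≤ |b1 (k + 1) - b1 (k + 1 + n)| + |psum a0 (k + 1 + n) - psum a0 (k + 1)| := by
      have h5 : (b1 (k + 1) + psum a0 (k + 1)) - (b1 (k + 1 + n) + psum a0 (k + 1 + n))
          = (b1 (k + 1) - b1 (k + 1 + n)) - (psum a0 (k + 1 + n) - psum a0 (k + 1)) := by ring
      rw [h5]
      exact abs_sub _ _
    rw [abs_of_nonneg (sub_nonneg.2 h3)] at h4
    linarith
  have hbdd0 : ∀ k : ℕ, BddAbove (Set.range fun n : ℕ =>
      |(b0 (k + 1) + psum a1 (k + 1)) - (b0 (k + 1 + n) + psum a1 (k + 1 + n))|) := by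
    intro k
    refine ⟨(⨆ m : ℕ, |b0 (k + 1) - b0 (k + 1 + m)|) + (lsum a1 - psum a1 (k + 1)), ?_⟩
    rintro d ⟨n, rfl⟩
    exact key0 k n
  have hbdd1 : ∀ k : ℕ, BddAbove (Set.range fun n : ℕ =>
      |(b1 (k + 1) + psum a0 (k + 1)) - (b1 (k + 1 + n) + psum a0 (k + 1 + n))|) := by
    intro k
    refine ⟨(⨆ m : ℕ, |b1 (k + 1) - b1 (k + 1 + m)|) + (lsum a0 - psum a0 (k + 1)), ?_⟩
    rintro d ⟨n, rfl⟩
    exact key1 k n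
  have hsum0 : Summable (fun k : ℕ => ⨆ n : ℕ,
      |(b0 (k + 1) + psum a1 (k + 1)) - (b0 (k + 1 + n) + psum a1 (k + 1 + n))|) := by
    apply Summable.of_nonneg_of_le (f := fun k =>
      (⨆ m : ℕ, |b0 (k + 1) - b0 (k + 1 + m)|) + (lsum a1 - psum a1 (k + 1)))
    · intro k
      refine le_trans (abs_nonneg _) (le_ciSup (hbdd0 k) 0)
    · intro k
      exact ciSup_le fun n => key0 k n
    · exact hDW.sumb0.add (summable_tail a1 ha1 hs1)
  have hsum1 : Summable (fun k : ℕ => ⨆ n : ℕ,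
      |(b1 (k + 1) + psum a0 (k + 1)) - (b1 (k + 1 + n) + psum a0 (k + 1 + n))|) := by
    apply Summable.of_nonneg_of_le (f := fun k =>
      (⨆ m : ℕ, |b1 (k + 1) - b1 (k + 1 + m)|) + (lsum a0 - psum a0 (k + 1)))
    · intro k
      refine le_trans (abs_nonneg _) (le_ciSup (hbdd1 k) 0)
    · intro k
      exact ciSup_le fun n => key1 k n
    · exact hDW.sumb1.add (summable_tail a0 ha0 hs0)
  refine ⟨Vdw a0 a1, hVcont.measurable,
    ⟨lsum a0 + lsum a1, Vdw_abs_le a0 a1 ha0 ha1 hs0 hs1⟩,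
    fun n hn x hx y hy => by rw [hc0 n hn x hx, hc0 n hn y hy],
    fun n hn x hx y hy => by rw [hc1 n hn x hx, hc1 n hn y hy],
    hnn, hsvar, hzero, hval0, hval1, ?_⟩
  exact
    { cont := hDW.cont.sub ((hVcont.comp hshft).sub hVcont)
      nonneg := hnn
      svar := hsvar
      zero := hzero
      pos0 := fun n hn => add_pos_of_pos_of_nonneg (hDW.bpos0 n hn) (psum_nonneg a1 ha1 n)
      pos1 := fun n hn => add_pos_of_pos_of_nonneg (hDW.bpos1 n hn) (psum_nonneg a0 ha0 n)
      val0 := hval0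
      val1 := hval1
      bdd0 := hbdd0
      bdd1 := hbdd1
      sum0 := hsum0
      sum1 := hsum1 }
end
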